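/- arXiv:math-ph/0608018 — 15 statements merged into one kernel-verified Lean document; each statement's English description precedes it below -/
import Mathlib

section
/- Let A : ℕ → Matrix (Fin m) (Fin n) ℝ be a sequence of real matrices converging entrywise to a matrix A₀ (i.e. for all indices i, j, the sequence p ↦ A p i j tends to A₀ i j), and suppose there is r such that the rank of A p equals r for every p. Then the rank of A₀ is at most r. -/
open Filter Topology

namespace Matrix

theorem natCast_le_rank_toLin'_iff {K m n : Type*} [Field K] [Fintype n] [DecidableEq n]
    (A : Matrix m n K) (k : ℕ) : (k : Cardinal) ≤ (toLin' A).rank ↔ k ≤ A.rank := by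
  rw [LinearMap.rank, ← Module.finrank_eq_rank, Nat.cast_le, toLin'_apply']
  rfl

variable {𝕜 m n : Type*} [NontriviallyNormedField 𝕜] [CompleteSpace 𝕜] [Fintype m] [Fintype n]
  [DecidableEq n]

theorem isOpen_setOf_le_rank (k : ℕ) : IsOpen {A : Matrix m n 𝕜 | k ≤ A.rank} := by
  let toCLM : Matrix m n 𝕜 →ₗ[𝕜] (n → 𝕜) →L[𝕜] (m → 𝕜) :=
    LinearMap.toContinuousLinearMap.toLinearMap ∘ₗ toLin'.toLinearMap
  simpa [toCLM, natCast_le_rank_toLin'_iff] using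
    (isOpen_setOfPred_nat_le_rank k).preimage (LinearMap.continuous_of_finiteDimensional toCLM)

theorem isClosed_setOf_rank_le (r : ℕ) : IsClosed {A : Matrix m n 𝕜 | A.rank ≤ r} := by
  have := (isOpen_setOf_le_rank (m := m) (n := n) (𝕜 := 𝕜) (r + 1)).isClosed_compl
  simpa only [Set.compl_ofPred, not_le, Nat.lt_succ_iff] using this

end Matrix

/-- If a sequence of real `m × n` matrices converges entrywise to `A₀` and each matrix in the
sequence has rank `r`, then the rank of `A₀` is at most `r`. -/
theorem rank_of_entrywise_limit_le {m n : ℕ} (A : ℕ → Matrix (Fin m) (Fin n) ℝ)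
    (A₀ : Matrix (Fin m) (Fin n) ℝ)
    (hconv : ∀ i j, Tendsto (fun p => A p i j) atTop (nhds (A₀ i j)))
    (r : ℕ) (hrank : ∀ p, (A p).rank = r) :
    A₀.rank ≤ r := by
  have hA : Tendsto A atTop (𝓝 A₀) := tendsto_pi_nhds.2 fun i => tendsto_pi_nhds.2 (hconv i)
  exact (Matrix.isClosed_setOf_rank_le r).mem_of_tendsto hA (.of_forall fun p => (hrank p).le)
end

section
/- Suppose L₀ is a sequential contraction of L. Then the maximal dimension of an abelian subalgebra does not decrease: for every Lie subalgebra K of L which is abelian (IsLieAbelian K), there exists a Lie subalgebra K₀ of L₀ which is abelian and satisfies finrank ℝ K₀ ≥ finrank ℝ K. -/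
open Filter Module

/-- `L₀` is a sequential contraction of the real Lie algebra `L`: there is a sequence of
real-linear equivalences `T p : L ≃ₗ[ℝ] L₀` such that the transported brackets converge to the
bracket of `L₀`. -/
def IsSequentialContraction (L L₀ : Type*) [LieRing L] [LieAlgebra ℝ L]
    [LieRing L₀] [LieAlgebra ℝ L₀] [TopologicalSpace L₀] : Prop :=
  ∃ T : ℕ → (L ≃ₗ[ℝ] L₀), ∀ x y : L₀,
    Tendsto (fun p => T p ⁅(T p).symm x, (T p).symm y⁆) atTop (nhds ⁅x, y⁆)

/-!
The subspaces `T p (K)` of `L₀` all have dimension `d = dim K`, and the transported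
brackets vanish on them. Orthonormal bases of these subspaces (for an auxiliary Euclidean
structure on `L₀`) lie in a compact set, so along a subsequence they converge to an orthonormal,
hence linearly independent, family `g`. Being bilinear maps on a finite-dimensional space, the
transported brackets converge jointly in both arguments, so `⁅g i, g j⁆ = 0`, and `g` spans an
abelian subalgebra of dimension `d`.
-/

open Topology

theorem LinearMap.tendsto_apply₂_of_forall_tendsto {𝕜 M N P : Type*}
    [NontriviallyNormedField 𝕜] [CompleteSpace 𝕜]
    [AddCommGroup M] [Module 𝕜 M] [FiniteDimensional 𝕜 M] [TopologicalSpace M]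
    [IsTopologicalAddGroup M] [ContinuousSMul 𝕜 M] [T2Space M]
    [AddCommGroup N] [Module 𝕜 N] [FiniteDimensional 𝕜 N] [TopologicalSpace N]
    [IsTopologicalAddGroup N] [ContinuousSMul 𝕜 N] [T2Space N]
    [AddCommGroup P] [Module 𝕜 P] [TopologicalSpace P] [ContinuousAdd P] [ContinuousSMul 𝕜 P]
    {B : ℕ → M →ₗ[𝕜] N →ₗ[𝕜] P} {C : M →ₗ[𝕜] N →ₗ[𝕜] P}
    (hB : ∀ x y, Tendsto (fun p => B p x y) atTop (𝓝 (C x y)))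
    {xs : ℕ → M} {ys : ℕ → N} {x : M} {y : N}
    (hx : Tendsto xs atTop (𝓝 x)) (hy : Tendsto ys atTop (𝓝 y)) :
    Tendsto (fun p => B p (xs p) (ys p)) atTop (𝓝 (C x y)) := by
  let bM := Module.finBasis 𝕜 M
  let bN := Module.finBasis 𝕜 N
  have expand (D : M →ₗ[𝕜] N →ₗ[𝕜] P) (u : M) (v : N) :
      D u v = ∑ i, ∑ j, bM.repr u i • bN.repr v j • D (bM i) (bN j) := by
    rw [← LinearMap.sum_repr_mul_repr_mul bM bN]
    simp [Finsupp.sum_fintype]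
  rw [expand C]
  refine (tendsto_finsetSum _ fun i _ => tendsto_finsetSum _ fun j _ => ?_).congr
    fun p => (expand (B p) (xs p) (ys p)).symm
  exact (((bM.coord i).continuous_of_finiteDimensional.tendsto x).comp hx).smul
    ((((bN.coord j).continuous_of_finiteDimensional.tendsto y).comp hy).smul (hB _ _))

theorem exists_orthonormal_tendsto_subseq {E ι : Type*} [NormedAddCommGroup E]
    [InnerProductSpace ℝ E] [FiniteDimensional ℝ E] [Fintype ι]
    (f : ℕ → ι → E) (hf : ∀ p, Orthonormal ℝ (f p)) :
    ∃ g : ι → E, Orthonormal ℝ g ∧ ∃ ψ : ℕ → ℕ, StrictMono ψ ∧ Tendsto (f ∘ ψ) atTop (𝓝 g) := by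
  classical
  obtain ⟨g, -, ψ, hψ, hlim⟩ := (isCompact_closedBall (0 : ι → E) 1).tendsto_subseq (x := f)
    fun p => mem_closedBall_zero_iff.2 <| (pi_norm_le_iff_of_nonneg zero_le_one).2
      fun i => ((hf p).1 i).le
  refine ⟨g, orthonormal_iff_ite.2 fun i j => ?_, ψ, hψ, hlim⟩
  exact tendsto_nhds_unique (((tendsto_pi_nhds.1 hlim i).inner (tendsto_pi_nhds.1 hlim j)).congr
    fun k => orthonormal_iff_ite.1 (hf (ψ k)) i j) tendsto_const_nhds

theorem exists_linearIndependent_tendsto_of_finrank_eq {V : Type*} [AddCommGroup V]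
    [Module ℝ V] [FiniteDimensional ℝ V] [TopologicalSpace V] [IsTopologicalAddGroup V]
    [ContinuousSMul ℝ V] [T2Space V] {d : ℕ} (W : ℕ → Submodule ℝ V)
    (hW : ∀ p, finrank ℝ (W p) = d) :
    ∃ (f : ℕ → Fin d → V) (g : Fin d → V), (∀ p i, f p i ∈ W p) ∧ LinearIndependent ℝ g ∧
      ∃ ψ : ℕ → ℕ, StrictMono ψ ∧ ∀ i, Tendsto (fun k => f (ψ k) i) atTop (𝓝 (g i)) := by
  let φ : V ≃L[ℝ] EuclideanSpace ℝ (Fin (finrank ℝ V)) :=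
    ContinuousLinearEquiv.ofFinrankEq finrank_euclideanSpace_fin.symm
  let b p : OrthonormalBasis (Fin d) ℝ ((W p).map φ.toLinearEquiv.toLinearMap) :=
    (stdOrthonormalBasis ℝ _).reindex (finCongr <| by rw [LinearEquiv.finrank_map_eq]; exact hW p)
  obtain ⟨g, hg, ψ, hψ, hlim⟩ := exists_orthonormal_tendsto_subseq
    (fun p i => (b p i : EuclideanSpace ℝ (Fin (finrank ℝ V))))
    fun p => (b p).orthonormal.comp_linearIsometry (Submodule.subtypeₗᵢ _)
  refine ⟨fun p i => φ.symm (b p i), φ.symm ∘ g, fun p i => ?_,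
    hg.linearIndependent.map' _ φ.symm.toLinearEquiv.ker, ψ, hψ,
    fun i => (φ.symm.continuous.tendsto _).comp (tendsto_pi_nhds.1 hlim i)⟩
  obtain ⟨x, hx, hφx⟩ := (b p i).2
  simpa [← hφx] using hx

section TransportedLie

variable {R L M : Type*} [CommRing R] [LieRing L] [LieAlgebra R L] [AddCommGroup M] [Module R M]

def LinearEquiv.transportedLie (T : L ≃ₗ[R] M) : M →ₗ[R] M →ₗ[R] M :=
  ((LieModule.toEnd R L L : L →ₗ[R] Module.End R L).compl₁₂ T.symm.toLinearMap
    T.symm.toLinearMap).compr₂ T.toLinearMap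

@[simp]
theorem LinearEquiv.transportedLie_apply (T : L ≃ₗ[R] M) (x y : M) :
    T.transportedLie x y = T ⁅T.symm x, T.symm y⁆ := rfl

theorem LinearEquiv.transportedLie_eq_zero_of_mem (T : L ≃ₗ[R] M) {K : LieSubalgebra R L}
    [IsLieAbelian K] {x y : M} (hx : x ∈ K.toSubmodule.map T.toLinearMap)
    (hy : y ∈ K.toSubmodule.map T.toLinearMap) : T.transportedLie x y = 0 := by
  obtain ⟨a, ha, rfl⟩ := hx
  obtain ⟨b, hb, rfl⟩ := hy
  have hab : ⁅a, b⁆ = 0 := congrArg Subtype.val (trivial_lie_zero K K ⟨a, ha⟩ ⟨b, hb⟩)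
  simp [hab]

end TransportedLie

open LieSubalgebra in
theorem abelian_subalgebra_finrank_le_of_contraction_general {L L₀ : Type*} [LieRing L] [LieAlgebra ℝ L] [LieRing L₀] [LieAlgebra ℝ L₀]
    [Module.Finite ℝ L₀]
    [TopologicalSpace L₀] [IsTopologicalAddGroup L₀] [ContinuousSMul ℝ L₀] [T2Space L₀]
    (h : IsSequentialContraction L L₀) :
    ∀ K : LieSubalgebra ℝ L, IsLieAbelian K →
      ∃ K₀ : LieSubalgebra ℝ L₀, IsLieAbelian K₀ ∧ finrank ℝ K₀ ≥ finrank ℝ K := by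
  intro K hK
  obtain ⟨T, hT⟩ := h
  obtain ⟨f, g, hfK, hg, ψ, hψ, hfg⟩ := exists_linearIndependent_tendsto_of_finrank_eq
    (fun p => K.toSubmodule.map (T p).toLinearMap) fun p => LinearEquiv.finrank_map_eq (T p) _
  have hg_lie : ∀ x ∈ Set.range g, ∀ y ∈ Set.range g, ⁅x, y⁆ = 0 := by
    rintro _ ⟨i, rfl⟩ _ ⟨j, rfl⟩
    refine tendsto_nhds_unique (LinearMap.tendsto_apply₂_of_forall_tendsto
      (B := fun k => (T (ψ k)).transportedLie) (C := LieModule.toEnd ℝ L₀ L₀)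
      (fun x y => (hT x y).comp hψ.tendsto_atTop) (hfg i) (hfg j)) ?_
    exact tendsto_const_nhds.congr fun k =>
      ((T (ψ k)).transportedLie_eq_zero_of_mem (hfK _ i) (hfK _ j)).symm
  refine ⟨lieSpan ℝ L₀ (Set.range g), isLieAbelian_lieSpan_iff.2 hg_lie, ?_⟩
  change finrank ℝ K.toSubmodule ≤ finrank ℝ (lieSpan ℝ L₀ (Set.range g)).toSubmodule
  rw [coe_lieSpan_eq_span_of_forall_lie_eq_zero hg_lie, finrank_span_eq_card hg, Fintype.card_fin]

/-- Under a sequential contraction, the maximal dimension of an abelian subalgebra does not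
decrease. -/
theorem abelian_subalgebra_finrank_le_of_contraction {L L₀ : Type*} [LieRing L] [LieAlgebra ℝ L] [LieRing L₀] [LieAlgebra ℝ L₀]
    [Module.Finite ℝ L] [Module.Finite ℝ L₀]
    [TopologicalSpace L₀] [IsTopologicalAddGroup L₀] [ContinuousSMul ℝ L₀] [T2Space L₀]
    (h : IsSequentialContraction L L₀) :
    ∀ K : LieSubalgebra ℝ L, IsLieAbelian K →
      ∃ K₀ : LieSubalgebra ℝ L₀, IsLieAbelian K₀ ∧ finrank ℝ K₀ ≥ finrank ℝ K :=
  abelian_subalgebra_finrank_le_of_contraction_general h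
end

section
/- Suppose L₀ is a sequential contraction of L. Then the dimensions of the terms of the upper central series do not decrease: for every l : ℕ, finrank ℝ (((⊥ : LieSubmodule ℝ L₀ L₀).ucs l) : Submodule ℝ L₀) ≥ finrank ℝ (((⊥ : LieSubmodule ℝ L L).ucs l) : Submodule ℝ L). In particular (l = 1) the dimension of the center of L₀ is at least the dimension of the center of L. -/
/-!
Write `𝔷ₗ` for the `l`-th term of the upper central series. Every limit of vectors
`z p ∈ T p (𝔷ₗ(L))` lies in `𝔷ₗ(L₀)`: by induction on `l`, since `⁅y, z p⁆ ∈ T p (𝔷ₗ₋₁(L))` after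
transport and, in finite dimension, the transported brackets `T p ⁅(T p).symm y, (T p).symm ·⁆`
converge jointly in their argument. The dimension bound is then lower semicontinuity: if `𝔷ₗ(L₀)`
had smaller dimension, every `T p (𝔷ₗ(L))` would meet a fixed complement `K` of `𝔷ₗ(L₀)` in a
vector from a compact set avoiding `0`, and a cluster point of these vectors would be a nonzero
element of `K ⊓ 𝔷ₗ(L₀)`.
-/

open Filter Module

open Topology

theorem tendsto_linearMap_apply_of_tendsto_pointwise {𝕜 E F ι : Type*}
    [NontriviallyNormedField 𝕜] [CompleteSpace 𝕜] [AddCommGroup E] [Module 𝕜 E]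
    [FiniteDimensional 𝕜 E] [TopologicalSpace E] [IsTopologicalAddGroup E] [ContinuousSMul 𝕜 E]
    [T2Space E] [AddCommGroup F] [Module 𝕜 F] [TopologicalSpace F] [IsTopologicalAddGroup F]
    [ContinuousSMul 𝕜 F] {l : Filter ι}
    {f : ι → E →ₗ[𝕜] F} {g : E →ₗ[𝕜] F} (hf : ∀ v, Tendsto (fun i => f i v) l (𝓝 (g v)))
    {z : ι → E} {w : E} (hz : Tendsto z l (𝓝 w)) :
    Tendsto (fun i => f i (z i)) l (𝓝 (g w)) := by
  let b := Module.finBasis 𝕜 E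
  have expand (h : E →ₗ[𝕜] F) (v : E) : h v = ∑ j, b.repr v j • h (b j) := by
    conv_lhs => rw [← b.sum_repr v]
    simp only [map_sum, map_smul]
  have hcoord (j) : Tendsto (fun i => b.repr (z i) j) l (𝓝 (b.repr w j)) :=
    ((b.coord j).continuous_of_finiteDimensional.tendsto w).comp hz
  have := tendsto_finsetSum Finset.univ fun j _ => (hcoord j).smul (hf (b j))
  simpa only [← expand] using this

section

variable {E : Type*} [AddCommGroup E] [Module ℝ E] [FiniteDimensional ℝ E]
  [TopologicalSpace E] [IsTopologicalAddGroup E] [ContinuousSMul ℝ E] [T2Space E]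

theorem exists_isCompact_zero_notMem_forall_exists_smul_mem :
    ∃ S : Set E, IsCompact S ∧ 0 ∉ S ∧ ∀ x ≠ (0 : E), ∃ c : ℝ, c • x ∈ S := by
  let e : E ≃L[ℝ] (Fin (finrank ℝ E) → ℝ) :=
    (Module.finBasis ℝ E).equivFun.toContinuousLinearEquiv
  refine ⟨e.symm '' Metric.sphere 0 1, (isCompact_sphere 0 1).image e.symm.continuous, ?_, ?_⟩
  · rintro ⟨y, hy, hy0⟩
    rw [e.symm.map_eq_zero_iff] at hy0
    simp [hy0] at hy
  · intro x hx
    refine ⟨‖e x‖⁻¹, e (‖e x‖⁻¹ • x), ?_, e.symm_apply_apply _⟩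
    have : e x ≠ 0 := e.map_ne_zero_iff.mpr hx
    simp [norm_smul, this]

theorem le_finrank_of_forall_mapClusterPt_mem {ι : Type*} {l : Filter ι} [l.NeBot]
    {V : ι → Submodule ℝ E} {W : Submodule ℝ E} {d : ℕ} (hV : ∀ i, d ≤ finrank ℝ (V i))
    (hW : ∀ (z : ι → E) (w : E), (∀ i, z i ∈ V i) → MapClusterPt w l z → w ∈ W) :
    d ≤ finrank ℝ W := by
  by_contra! hlt
  obtain ⟨S, hS, hS0, hSmul⟩ := exists_isCompact_zero_notMem_forall_exists_smul_mem (E := E)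
  obtain ⟨K, hWK⟩ := W.exists_isCompl
  have hVK (i : ι) : ∃ x ∈ V i ⊓ K, x ∈ S := by
    have hdim := Submodule.finrank_sup_add_finrank_inf_eq (V i) K
    have : V i ⊓ K ≠ ⊥ := by
      intro hbot
      rw [hbot, finrank_bot] at hdim
      have := (V i ⊔ K).finrank_le
      have := Submodule.finrank_add_eq_of_isCompl hWK
      have := hV i
      omega
    obtain ⟨x, hx, hx0⟩ := Submodule.exists_mem_ne_zero_of_ne_bot this
    obtain ⟨c, hc⟩ := hSmul x hx0
    exact ⟨c • x, (V i ⊓ K).smul_mem c hx, hc⟩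
  choose z hzVK hzS using hVK
  obtain ⟨w, hwS, hw⟩ := hS.exists_mapClusterPt_of_frequently (l := l) (.of_forall hzS)
  have hwW : w ∈ W := hW z w (fun i => (hzVK i).1) hw
  have hwK : w ∈ K := K.closed_of_finiteDimensional.mem_of_mapClusterPt hw
    (Eventually.of_forall fun i => (hzVK i).2)
  have hw0 : w = 0 := Submodule.disjoint_def.mp hWK.disjoint w hwW hwK
  exact hS0 (hw0 ▸ hwS)

end

theorem mem_ucs_of_tendsto {𝕜 ι L L₀ : Type*} [NontriviallyNormedField 𝕜] [CompleteSpace 𝕜]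
    [LieRing L] [LieAlgebra 𝕜 L] [LieRing L₀] [LieAlgebra 𝕜 L₀] [FiniteDimensional 𝕜 L₀]
    [TopologicalSpace L₀] [IsTopologicalAddGroup L₀] [ContinuousSMul 𝕜 L₀] [T2Space L₀]
    {l : Filter ι} [l.NeBot] {T : ι → L ≃ₗ[𝕜] L₀}
    (hT : ∀ x y : L₀, Tendsto (fun i => T i ⁅(T i).symm x, (T i).symm y⁆) l (𝓝 ⁅x, y⁆))
    (k : ℕ) {z : ι → L₀} {w : L₀} (hz : ∀ i, (T i).symm (z i) ∈ (⊥ : LieSubmodule 𝕜 L L).ucs k)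
    (hzw : Tendsto z l (𝓝 w)) :
    w ∈ (⊥ : LieSubmodule 𝕜 L₀ L₀).ucs k := by
  induction k generalizing z w with
  | zero =>
    simp only [LieSubmodule.ucs_zero, LieSubmodule.mem_bot, LinearEquiv.map_eq_zero_iff] at hz ⊢
    exact tendsto_nhds_unique hzw (by simp [funext hz])
  | succ k ih =>
    simp only [LieSubmodule.ucs_succ, LieSubmodule.mem_normalizer] at hz ⊢
    intro y
    refine ih (z := fun i => T i ⁅(T i).symm y, (T i).symm (z i)⁆) (fun i => ?_) ?_
    · simpa using hz i ((T i).symm y)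
    · exact tendsto_linearMap_apply_of_tendsto_pointwise
        (f := fun i => (T i).conj (LieAlgebra.ad 𝕜 L ((T i).symm y)))
        (g := LieAlgebra.ad 𝕜 L₀ y) (by simpa using hT y) hzw

theorem ucs_finrank_le_of_contraction_general {L L₀ : Type*} [LieRing L] [LieAlgebra ℝ L] [LieRing L₀] [LieAlgebra ℝ L₀]
    [Module.Finite ℝ L₀]
    [TopologicalSpace L₀] [IsTopologicalAddGroup L₀] [ContinuousSMul ℝ L₀] [T2Space L₀]
    (h : IsSequentialContraction L L₀) :
    ∀ l : ℕ,
      finrank ℝ (((⊥ : LieSubmodule ℝ L₀ L₀).ucs l : LieSubmodule ℝ L₀ L₀) : Submodule ℝ L₀) ≥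
        finrank ℝ (((⊥ : LieSubmodule ℝ L L).ucs l : LieSubmodule ℝ L L) : Submodule ℝ L) := by
  obtain ⟨T, hT⟩ := h
  intro k
  set V := ((⊥ : LieSubmodule ℝ L L).ucs k : Submodule ℝ L)
  have hV (p : ℕ) : finrank ℝ V ≤ finrank ℝ (V.map (T p : L →ₗ[ℝ] L₀)) :=
    (LinearEquiv.finrank_map_eq _ _).ge
  refine le_finrank_of_forall_mapClusterPt_mem (l := atTop) hV fun z w hz hw => ?_
  obtain ⟨U, hU, hzw⟩ := mapClusterPt_iff_ultrafilter.mp hw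
  exact mem_ucs_of_tendsto (fun x y => (hT x y).mono_left hU) k
    (fun p => (Submodule.mem_map_equiv _).mp (hz p)) hzw

/-- Under a sequential contraction, the dimensions of the terms of the upper central series do
not decrease. -/
theorem ucs_finrank_le_of_contraction {L L₀ : Type*} [LieRing L] [LieAlgebra ℝ L] [LieRing L₀] [LieAlgebra ℝ L₀]
    [Module.Finite ℝ L] [Module.Finite ℝ L₀]
    [TopologicalSpace L₀] [IsTopologicalAddGroup L₀] [ContinuousSMul ℝ L₀] [T2Space L₀]
    (h : IsSequentialContraction L L₀) :
    ∀ l : ℕ,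
      finrank ℝ (((⊥ : LieSubmodule ℝ L₀ L₀).ucs l : LieSubmodule ℝ L₀ L₀) : Submodule ℝ L₀) ≥
        finrank ℝ (((⊥ : LieSubmodule ℝ L L).ucs l : LieSubmodule ℝ L L) : Submodule ℝ L) :=
  ucs_finrank_le_of_contraction_general h
end

section
/- Suppose L₀ is a sequential contraction of L. Then the dimensions of the terms of the derived series do not increase: for every l : ℕ, finrank ℝ (LieAlgebra.derivedSeries ℝ L₀ l : Submodule ℝ L₀) ≤ finrank ℝ (LieAlgebra.derivedSeries ℝ L l : Submodule ℝ L). -/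
open Filter Module

/-!
Transport the bracket of `L` to `L₀` along `T p`. Every element of the `k`-th derived ideal of
`L₀` is a limit of elements of `T p (L⁽ᵏ⁾)`: by induction on `k`, since on a finite-dimensional
space pointwise convergence of bilinear maps passes to convergent arguments, so a limit of
transported brackets of approximants is the bracket of the limits. A basis of `L₀⁽ᵏ⁾` is then
approximated by families in `T p (L⁽ᵏ⁾)`, which are eventually linearly independent since linear
independence is an open condition; hence `dim L₀⁽ᵏ⁾ ≤ dim T p (L⁽ᵏ⁾) = dim L⁽ᵏ⁾`.
-/

open Topology

section LowerLimit

variable {ι R E : Type*} {l : Filter ι} [Semiring R] [AddCommMonoid E] [Module R E]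
  [TopologicalSpace E] [ContinuousAdd E] [ContinuousConstSMul R E]

/-- The Kuratowski lower limit of a family of submodules. -/
def lowerLimit (l : Filter ι) (S : ι → Submodule R E) : Submodule R E where
  carrier := {v | ∃ w : ι → E, (∀ᶠ p in l, w p ∈ S p) ∧ Tendsto w l (𝓝 v)}
  add_mem' := by
    rintro _ _ ⟨w, hwS, hw⟩ ⟨w', hwS', hw'⟩
    exact ⟨w + w', (hwS.and hwS').mono fun p hp => add_mem hp.1 hp.2, hw.add hw'⟩
  zero_mem' := ⟨0, .of_forall fun p => zero_mem (S p), tendsto_const_nhds⟩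
  smul_mem' := by
    rintro c _ ⟨w, hwS, hw⟩
    exact ⟨c • w, hwS.mono fun p hp => Submodule.smul_mem _ c hp, hw.const_smul c⟩

theorem le_lowerLimit_of_eventually_le {V : Submodule R E} {S : ι → Submodule R E}
    (h : ∀ᶠ p in l, V ≤ S p) : V ≤ lowerLimit l S :=
  fun v hv => ⟨fun _ => v, h.mono fun _ hp => hp hv, tendsto_const_nhds⟩

end LowerLimit

section FiniteDimensional

variable {ι 𝕜 E F G : Type*} {l : Filter ι} [NontriviallyNormedField 𝕜] [CompleteSpace 𝕜]
  [AddCommGroup E] [Module 𝕜 E] [TopologicalSpace E] [IsTopologicalAddGroup E]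
  [ContinuousSMul 𝕜 E] [T2Space E] [FiniteDimensional 𝕜 E]
  [AddCommGroup F] [Module 𝕜 F] [TopologicalSpace F] [IsTopologicalAddGroup F]
  [ContinuousSMul 𝕜 F]
  [AddCommGroup G] [Module 𝕜 G] [TopologicalSpace G] [IsTopologicalAddGroup G]
  [ContinuousSMul 𝕜 G]

theorem LinearIndependent.eventually_of_finiteDimensional {κ : Type*} [Finite κ] {v : κ → E}
    (hv : LinearIndependent 𝕜 v) : ∀ᶠ w in 𝓝 v, LinearIndependent 𝕜 w := by
  let e : E ≃L[𝕜] (Fin (finrank 𝕜 E) → 𝕜) :=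
    (finBasis 𝕜 E).equivFun.toContinuousLinearEquiv
  have he : Continuous fun w : κ → E => e ∘ w :=
    continuous_pi fun i => e.continuous.comp (continuous_apply i)
  have he_inj : LinearMap.ker (e : E →ₗ[𝕜] Fin (finrank 𝕜 E) → 𝕜) = ⊥ :=
    LinearMap.ker_eq_bot_of_injective e.injective
  filter_upwards [he.tendsto v ((LinearMap.linearIndependent_iff _ he_inj).2 hv).eventually]
    with w hw
  exact (LinearMap.linearIndependent_iff _ he_inj).1 hw

theorem LinearMap.tendsto_apply_of_tendsto_pointwise {f : ι → E →ₗ[𝕜] F} {g : E →ₗ[𝕜] F}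
    (hf : ∀ x, Tendsto (fun p => f p x) l (𝓝 (g x))) {a : ι → E} {x : E}
    (ha : Tendsto a l (𝓝 x)) : Tendsto (fun p => f p (a p)) l (𝓝 (g x)) := by
  let b := finBasis 𝕜 E
  have expand (h : E →ₗ[𝕜] F) (y : E) : h y = ∑ i, b.repr y i • h (b i) := by
    conv_lhs => rw [← b.sum_repr y]
    simp only [map_sum, map_smul]
  rw [show (fun p => f p (a p)) = fun p => ∑ i, b.repr (a p) i • f p (b i) from
    funext fun p => expand (f p) (a p), expand g]
  refine tendsto_finsetSum _ fun i _ => Tendsto.smul ?_ (hf (b i))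
  exact ((b.coord i).continuous_of_finiteDimensional.tendsto x).comp ha

theorem LinearMap.tendsto_apply₂_of_tendsto_pointwise [FiniteDimensional 𝕜 F] [T2Space F]
    {B : ι → E →ₗ[𝕜] F →ₗ[𝕜] G} {B₀ : E →ₗ[𝕜] F →ₗ[𝕜] G}
    (hB : ∀ x y, Tendsto (fun p => B p x y) l (𝓝 (B₀ x y))) {a : ι → E} {b : ι → F} {x : E}
    {y : F} (ha : Tendsto a l (𝓝 x)) (hb : Tendsto b l (𝓝 y)) :
    Tendsto (fun p => B p (a p) (b p)) l (𝓝 (B₀ x y)) :=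
  tendsto_apply_of_tendsto_pointwise (fun y =>
    tendsto_apply_of_tendsto_pointwise (f := fun p => (B p).flip y) (g := B₀.flip y)
      (fun x => hB x y) ha) hb

theorem apply₂_mem_lowerLimit [FiniteDimensional 𝕜 F] [T2Space F]
    {B : ι → E →ₗ[𝕜] F →ₗ[𝕜] G} {B₀ : E →ₗ[𝕜] F →ₗ[𝕜] G}
    (hB : ∀ x y, Tendsto (fun p => B p x y) l (𝓝 (B₀ x y)))
    {S : ι → Submodule 𝕜 E} {S' : ι → Submodule 𝕜 F} {S'' : ι → Submodule 𝕜 G}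
    (hS : ∀ᶠ p in l, ∀ x ∈ S p, ∀ y ∈ S' p, B p x y ∈ S'' p)
    {x : E} {y : F} (hx : x ∈ lowerLimit l S) (hy : y ∈ lowerLimit l S') :
    B₀ x y ∈ lowerLimit l S'' := by
  obtain ⟨a, haS, ha⟩ := hx
  obtain ⟨b, hbS', hb⟩ := hy
  refine ⟨fun p => B p (a p) (b p), ?_, LinearMap.tendsto_apply₂_of_tendsto_pointwise hB ha hb⟩
  filter_upwards [hS, haS, hbS'] with p hp hap hbp using hp _ hap _ hbp

theorem eventually_finrank_le_of_le_lowerLimit {V : Submodule 𝕜 E} {S : ι → Submodule 𝕜 E}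
    (hV : V ≤ lowerLimit l S) : ∀ᶠ p in l, finrank 𝕜 V ≤ finrank 𝕜 (S p) := by
  let v := finBasis 𝕜 V
  choose w hwS hw using fun i => hV (v i).2
  have hw_indep : ∀ᶠ p in l, LinearIndependent 𝕜 fun i => w i p :=
    (tendsto_pi_nhds.2 hw).eventually
      (v.linearIndependent.map' V.subtype V.ker_subtype).eventually_of_finiteDimensional
  filter_upwards [hw_indep, eventually_all.2 hwS] with p hp hpS
  calc finrank 𝕜 V = finrank 𝕜 (Submodule.span 𝕜 (Set.range fun i => w i p)) := by
        rw [finrank_span_eq_card hp, Fintype.card_fin]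
    _ ≤ finrank 𝕜 (S p) :=
        Submodule.finrank_mono (Submodule.span_le.2 (Set.range_subset_iff.2 hpS))

end FiniteDimensional

section Lie

variable {R L L₀ : Type*} [CommRing R] [LieRing L] [LieAlgebra R L] [LieRing L₀] [LieAlgebra R L₀]

theorem LieAlgebra.derivedSeries_succ_eq_span (k : ℕ) :
    (derivedSeries R L (k + 1) : Submodule R L) =
      Submodule.span R {⁅x, y⁆ | (x ∈ derivedSeries R L k) (y ∈ derivedSeries R L k)} := by
  rw [derivedSeries_def, derivedSeriesOfIdeal_succ, ← derivedSeries_def]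
  exact LieSubmodule.lieIdeal_oper_eq_linear_span' ..

def LinearEquiv.transportBracket (T : L ≃ₗ[R] L₀) : L₀ →ₗ[R] L₀ →ₗ[R] L₀ :=
  T.arrowCongr (T.arrowCongr T) (LieModule.toEnd R L L)

@[simp]
theorem LinearEquiv.transportBracket_apply (T : L ≃ₗ[R] L₀) (x y : L₀) :
    T.transportBracket x y = T ⁅T.symm x, T.symm y⁆ := by
  simp [transportBracket]

end Lie

theorem derivedSeries_le_lowerLimit {ι 𝕜 L L₀ : Type*} {l : Filter ι}
    [NontriviallyNormedField 𝕜] [CompleteSpace 𝕜] [LieRing L] [LieAlgebra 𝕜 L] [LieRing L₀]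
    [LieAlgebra 𝕜 L₀] [TopologicalSpace L₀] [IsTopologicalAddGroup L₀] [ContinuousSMul 𝕜 L₀]
    [T2Space L₀] [FiniteDimensional 𝕜 L₀] {T : ι → L ≃ₗ[𝕜] L₀}
    (hT : ∀ x y : L₀, Tendsto (fun p => T p ⁅(T p).symm x, (T p).symm y⁆) l (𝓝 ⁅x, y⁆))
    (k : ℕ) :
    (LieAlgebra.derivedSeries 𝕜 L₀ k : Submodule 𝕜 L₀) ≤
      lowerLimit l fun p =>
        (LieAlgebra.derivedSeries 𝕜 L k : Submodule 𝕜 L).map (T p : L →ₗ[𝕜] L₀) := by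
  induction k with
  | zero =>
    exact le_lowerLimit_of_eventually_le (.of_forall fun p v _ => ⟨(T p).symm v, by simp⟩)
  | succ k ih =>
    rw [LieAlgebra.derivedSeries_succ_eq_span, Submodule.span_le]
    rintro _ ⟨x, hx, y, hy, rfl⟩
    refine apply₂_mem_lowerLimit (B := fun p => (T p).transportBracket)
      (B₀ := LieModule.toEnd 𝕜 L₀ L₀) (by simpa using hT) (.of_forall fun p => ?_)
      (ih hx) (ih hy)
    rintro _ ⟨a, ha, rfl⟩ _ ⟨b, hb, rfl⟩
    refine ⟨⁅a, b⁆, ?_, by simp⟩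
    rw [LieAlgebra.derivedSeries_succ_eq_span]
    exact Submodule.subset_span ⟨a, ha, b, hb, rfl⟩

theorem derivedSeries_finrank_le_of_contraction_general {L L₀ : Type*} [LieRing L] [LieAlgebra ℝ L] [LieRing L₀] [LieAlgebra ℝ L₀]
    [Module.Finite ℝ L₀]
    [TopologicalSpace L₀] [IsTopologicalAddGroup L₀] [ContinuousSMul ℝ L₀] [T2Space L₀]
    (h : IsSequentialContraction L L₀) :
    ∀ l : ℕ,
      finrank ℝ (LieAlgebra.derivedSeries ℝ L₀ l : Submodule ℝ L₀) ≤
        finrank ℝ (LieAlgebra.derivedSeries ℝ L l : Submodule ℝ L) := by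
  intro k
  obtain ⟨T, hT⟩ := h
  obtain ⟨p, hp⟩ :=
    (eventually_finrank_le_of_le_lowerLimit (derivedSeries_le_lowerLimit hT k)).exists
  rwa [LinearEquiv.finrank_map_eq] at hp

/-- Under a sequential contraction, the dimensions of the terms of the derived series do not
increase. -/
theorem derivedSeries_finrank_le_of_contraction {L L₀ : Type*} [LieRing L] [LieAlgebra ℝ L] [LieRing L₀] [LieAlgebra ℝ L₀]
    [Module.Finite ℝ L] [Module.Finite ℝ L₀]
    [TopologicalSpace L₀] [IsTopologicalAddGroup L₀] [ContinuousSMul ℝ L₀] [T2Space L₀]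
    (h : IsSequentialContraction L L₀) :
    ∀ l : ℕ,
      finrank ℝ (LieAlgebra.derivedSeries ℝ L₀ l : Submodule ℝ L₀) ≤
        finrank ℝ (LieAlgebra.derivedSeries ℝ L l : Submodule ℝ L) :=
  derivedSeries_finrank_le_of_contraction_general h
end

section
/- Suppose L₀ is a sequential contraction of L. Then the maximal dimension of an abelian ideal does not decrease: for every Lie ideal I of L which is abelian (IsLieAbelian I), there exists a Lie ideal I₀ of L₀ which is abelian and satisfies finrank ℝ I₀ ≥ finrank ℝ I. -/
open Filter Module

/-!
The images `T p (I)` are subspaces of `L₀` of the fixed dimension `d = dim I`. Orthonormal frames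
of them live in a compact set, so along a subsequence they converge to a `d`-dimensional
subspace `V`. In finite dimension, pointwise convergence of bilinear maps is joint convergence,
so the transported brackets of limits of points of `T p (I)` converge to the bracket of `L₀`;
being an ideal and being abelian therefore pass from the `T p (I)` to `V`.
-/

open Topology

theorem LinearMap.eq_sum_repr_mul_repr_smul {R M N P ι κ : Type*} [CommSemiring R]
    [AddCommMonoid M] [Module R M] [AddCommMonoid N] [Module R N] [AddCommMonoid P] [Module R P]
    [Fintype ι] [Fintype κ] (bM : Basis ι R M) (bN : Basis κ R N) (B : M →ₗ[R] N →ₗ[R] P)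
    (x : M) (y : N) :
    B x y = ∑ i, ∑ j, (bM.repr x i * bN.repr y j) • B (bM i) (bN j) := by
  conv_lhs => rw [← bM.sum_repr x, ← bN.sum_repr y]
  simp only [map_sum, map_smul, LinearMap.sum_apply, LinearMap.smul_apply, Finset.smul_sum,
    smul_smul]
  rw [Finset.sum_comm]
  simp only [mul_comm]

theorem tendsto_apply_apply_of_forall_tendsto {𝕜 ι E F G : Type*}
    [NontriviallyNormedField 𝕜] [CompleteSpace 𝕜]
    [AddCommGroup E] [Module 𝕜 E] [TopologicalSpace E] [IsTopologicalAddGroup E]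
    [ContinuousSMul 𝕜 E] [T2Space E] [FiniteDimensional 𝕜 E]
    [AddCommGroup F] [Module 𝕜 F] [TopologicalSpace F] [IsTopologicalAddGroup F]
    [ContinuousSMul 𝕜 F] [T2Space F] [FiniteDimensional 𝕜 F]
    [AddCommGroup G] [Module 𝕜 G] [TopologicalSpace G] [ContinuousAdd G] [ContinuousSMul 𝕜 G]
    {l : Filter ι} {Bs : ι → E →ₗ[𝕜] F →ₗ[𝕜] G} {B : E →ₗ[𝕜] F →ₗ[𝕜] G}
    (hB : ∀ x y, Tendsto (fun k => Bs k x y) l (𝓝 (B x y)))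
    {xs : ι → E} {ys : ι → F} {x : E} {y : F} (hx : Tendsto xs l (𝓝 x))
    (hy : Tendsto ys l (𝓝 y)) :
    Tendsto (fun k => Bs k (xs k) (ys k)) l (𝓝 (B x y)) := by
  let bE := Module.finBasis 𝕜 E
  let bF := Module.finBasis 𝕜 F
  have hxi : ∀ i, Tendsto (fun k => bE.repr (xs k) i) l (𝓝 (bE.repr x i)) := fun i =>
    ((bE.coord i).continuous_of_finiteDimensional.tendsto x).comp hx
  have hyj : ∀ j, Tendsto (fun k => bF.repr (ys k) j) l (𝓝 (bF.repr y j)) := fun j =>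
    ((bF.coord j).continuous_of_finiteDimensional.tendsto y).comp hy
  rw [B.eq_sum_repr_mul_repr_smul bE bF x y,
    funext fun k => (Bs k).eq_sum_repr_mul_repr_smul bE bF (xs k) (ys k)]
  exact tendsto_finsetSum _ fun i _ => tendsto_finsetSum _ fun j _ =>
    ((hxi i).mul (hyj j)).smul (hB _ _)

/-- Convergence of subspaces in the sense of Painlevé–Kuratowski, standing in for convergence
in the Grassmannian. -/
structure IsSubmoduleLimit {R E : Type*} [Semiring R] [AddCommMonoid E] [Module R E]
    [TopologicalSpace E] (W : ℕ → Submodule R E) (V : Submodule R E) : Prop where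
  mem_of_tendsto {z : ℕ → E} {v : E} : (∀ k, z k ∈ W k) → Tendsto z atTop (𝓝 v) → v ∈ V
  exists_tendsto {v : E} : v ∈ V → ∃ z : ℕ → E, (∀ k, z k ∈ W k) ∧ Tendsto z atTop (𝓝 v)

theorem IsSubmoduleLimit.of_map {R E F : Type*} [Semiring R] [AddCommMonoid E] [Module R E]
    [TopologicalSpace E] [AddCommMonoid F] [Module R F] [TopologicalSpace F]
    {W : ℕ → Submodule R E} {V : Submodule R F} (e : E ≃L[R] F)
    (h : IsSubmoduleLimit (fun k => (W k).map e.toLinearEquiv.toLinearMap) V) :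
    IsSubmoduleLimit W (V.map e.symm.toLinearEquiv.toLinearMap) where
  mem_of_tendsto {z v} hz hlim := by
    have := h.mem_of_tendsto (fun k => Submodule.mem_map_of_mem (hz k))
      ((e.continuous.tendsto v).comp hlim)
    simpa using this
  exists_tendsto {v} hv := by
    obtain ⟨z, hzW, hz⟩ := h.exists_tendsto (by simpa using hv)
    refine ⟨e.symm ∘ z, fun k => by simpa using hzW k, ?_⟩
    simpa using (e.symm.continuous.tendsto (e v)).comp hz

section InnerProductSpace

variable {𝕜 E : Type*} [RCLike 𝕜] [NormedAddCommGroup E] [InnerProductSpace 𝕜 E]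

theorem isClosed_setOf_orthonormal {ι : Type*} : IsClosed {v : ι → E | Orthonormal 𝕜 v} := by
  classical
  simp only [orthonormal_iff_ite, Set.ofPred_forall]
  exact isClosed_iInter fun i => isClosed_iInter fun j =>
    isClosed_eq (by fun_prop) continuous_const

theorem exists_orthonormal_tendsto_subseq_s7 [FiniteDimensional 𝕜 E] {ι : Type*} [Fintype ι]
    {u : ℕ → ι → E} (hu : ∀ k, Orthonormal 𝕜 (u k)) :
    ∃ v, Orthonormal 𝕜 v ∧ ∃ φ : ℕ → ℕ, StrictMono φ ∧ Tendsto (u ∘ φ) atTop (𝓝 v) := by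
  have := FiniteDimensional.proper_rclike 𝕜 E
  have hK : IsCompact (Metric.closedBall (0 : ι → E) 1 ∩ {v | Orthonormal 𝕜 v}) :=
    (isCompact_closedBall 0 1).inter_right isClosed_setOf_orthonormal
  have hmem : ∀ k, u k ∈ Metric.closedBall (0 : ι → E) 1 ∩ {v | Orthonormal 𝕜 v} := fun k =>
    ⟨mem_closedBall_zero_iff.mpr <| (pi_norm_le_iff_of_nonneg zero_le_one).mpr fun i =>
      ((hu k).1 i).le, hu k⟩
  obtain ⟨v, ⟨-, hv⟩, φ, hφ, hlim⟩ := hK.tendsto_subseq hmem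
  exact ⟨v, hv, φ, hφ, hlim⟩

theorem Orthonormal.sum_inner_smul_eq_of_mem_span {ι : Type*} [Fintype ι] {v : ι → E}
    (hv : Orthonormal 𝕜 v) {x : E} (hx : x ∈ Submodule.span 𝕜 (Set.range v)) :
    ∑ i, inner 𝕜 (v i) x • v i = x := by
  obtain ⟨c, rfl⟩ := (Submodule.mem_span_range_iff_exists_fun 𝕜).mp hx
  simp only [hv.inner_right_fintype]

theorem Submodule.exists_orthonormal_span_range_eq (W : Submodule 𝕜 E) [FiniteDimensional 𝕜 W] :
    ∃ u : Fin (finrank 𝕜 W) → E, Orthonormal 𝕜 u ∧ Submodule.span 𝕜 (Set.range u) = W := by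
  let b := stdOrthonormalBasis 𝕜 W
  refine ⟨W.subtype ∘ b, b.orthonormal.comp_linearIsometry W.subtypeₗᵢ, ?_⟩
  rw [Set.range_comp, Submodule.span_image, ← b.coe_toBasis, b.toBasis.span_eq,
    Submodule.map_subtype_top]

theorem isSubmoduleLimit_span_range {ι : Type*} [Fintype ι] {u : ℕ → ι → E} {v : ι → E}
    (hu : ∀ k, Orthonormal 𝕜 (u k)) (hlim : Tendsto u atTop (𝓝 v)) :
    IsSubmoduleLimit (fun k => Submodule.span 𝕜 (Set.range (u k)))
      (Submodule.span 𝕜 (Set.range v)) where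
  mem_of_tendsto {z x} hz hzx := by
    have hui := tendsto_pi_nhds.mp hlim
    have hsum : Tendsto (fun k => ∑ i, inner 𝕜 (u k i) (z k) • u k i) atTop
        (𝓝 (∑ i, inner 𝕜 (v i) x • v i)) :=
      tendsto_finsetSum _ fun i _ => ((hui i).inner hzx).smul (hui i)
    rw [← tendsto_nhds_unique
      (hsum.congr fun k => (hu k).sum_inner_smul_eq_of_mem_span (hz k)) hzx]
    exact Submodule.sum_mem _ fun i _ => Submodule.smul_mem _ _ (Submodule.subset_span ⟨i, rfl⟩)
  exists_tendsto {x} hx := by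
    obtain ⟨c, rfl⟩ := (Submodule.mem_span_range_iff_exists_fun 𝕜).mp hx
    refine ⟨fun k => ∑ i, c i • u k i,
      fun k => (Submodule.mem_span_range_iff_exists_fun 𝕜).mpr ⟨c, rfl⟩, ?_⟩
    exact tendsto_finsetSum _ fun i _ => tendsto_const_nhds.smul (tendsto_pi_nhds.mp hlim i)

theorem InnerProductSpace.exists_isSubmoduleLimit_comp_of_finrank_eq [FiniteDimensional 𝕜 E]
    {d : ℕ} (W : ℕ → Submodule 𝕜 E) (hW : ∀ k, finrank 𝕜 (W k) = d) :
    ∃ φ : ℕ → ℕ, StrictMono φ ∧ ∃ V : Submodule 𝕜 E, finrank 𝕜 V = d ∧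
      IsSubmoduleLimit (W ∘ φ) V := by
  have hu : ∀ k, ∃ u : Fin d → E, Orthonormal 𝕜 u ∧ Submodule.span 𝕜 (Set.range u) = W k := by
    intro k
    obtain ⟨u, hu, hspan⟩ := (W k).exists_orthonormal_span_range_eq
    exact hW k ▸ ⟨u, hu, hspan⟩
  choose u hu hspan using hu
  obtain ⟨v, hv, φ, hφ, hlim⟩ := exists_orthonormal_tendsto_subseq_s7 hu
  refine ⟨φ, hφ, Submodule.span 𝕜 (Set.range v), ?_, ?_⟩
  · rw [finrank_span_eq_card hv.linearIndependent, Fintype.card_fin]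
  · simpa only [Function.comp_def, ← hspan] using
      isSubmoduleLimit_span_range (fun k => hu (φ k)) hlim

end InnerProductSpace

theorem exists_isSubmoduleLimit_comp_of_finrank_eq {𝕜 E : Type*} [RCLike 𝕜]
    [AddCommGroup E] [Module 𝕜 E] [TopologicalSpace E] [IsTopologicalAddGroup E]
    [ContinuousSMul 𝕜 E] [T2Space E] [FiniteDimensional 𝕜 E] {d : ℕ}
    (W : ℕ → Submodule 𝕜 E) (hW : ∀ k, finrank 𝕜 (W k) = d) :
    ∃ φ : ℕ → ℕ, StrictMono φ ∧ ∃ V : Submodule 𝕜 E, finrank 𝕜 V = d ∧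
      IsSubmoduleLimit (W ∘ φ) V := by
  obtain ⟨e⟩ := FiniteDimensional.nonempty_continuousLinearEquiv_of_finrank_eq
    (finrank_euclideanSpace_fin (𝕜 := 𝕜) (n := finrank 𝕜 E)).symm
  obtain ⟨φ, hφ, V, hV, hlim⟩ := InnerProductSpace.exists_isSubmoduleLimit_comp_of_finrank_eq
    (fun k => (W k).map e.toLinearEquiv.toLinearMap)
    fun k => (e.toLinearEquiv.finrank_map_eq (W k)).trans (hW k)
  exact ⟨φ, hφ, _, (e.symm.toLinearEquiv.finrank_map_eq V).trans hV, hlim.of_map e⟩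

section BilinearLimit

variable {𝕜 E : Type*} [NontriviallyNormedField 𝕜] [CompleteSpace 𝕜]
  [AddCommGroup E] [Module 𝕜 E] [TopologicalSpace E] [IsTopologicalAddGroup E]
  [ContinuousSMul 𝕜 E] [T2Space E] [FiniteDimensional 𝕜 E]
  {Bs : ℕ → E →ₗ[𝕜] E →ₗ[𝕜] E} {B : E →ₗ[𝕜] E →ₗ[𝕜] E} {W : ℕ → Submodule 𝕜 E}
  {V : Submodule 𝕜 E}

theorem IsSubmoduleLimit.apply_eq_zero (hV : IsSubmoduleLimit W V)
    (hB : ∀ x y, Tendsto (fun k => Bs k x y) atTop (𝓝 (B x y)))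
    (hW : ∀ k, ∀ x ∈ W k, ∀ y ∈ W k, Bs k x y = 0) {x y : E} (hx : x ∈ V) (hy : y ∈ V) :
    B x y = 0 := by
  obtain ⟨xs, hxW, hxs⟩ := hV.exists_tendsto hx
  obtain ⟨ys, hyW, hys⟩ := hV.exists_tendsto hy
  exact tendsto_nhds_unique (tendsto_apply_apply_of_forall_tendsto hB hxs hys)
    (tendsto_const_nhds.congr fun k => (hW k _ (hxW k) _ (hyW k)).symm)

theorem IsSubmoduleLimit.apply_mem (hV : IsSubmoduleLimit W V)
    (hB : ∀ x y, Tendsto (fun k => Bs k x y) atTop (𝓝 (B x y)))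
    (hW : ∀ k x, ∀ y ∈ W k, Bs k x y ∈ W k) (x : E) {y : E} (hy : y ∈ V) : B x y ∈ V := by
  obtain ⟨ys, hyW, hys⟩ := hV.exists_tendsto hy
  exact hV.mem_of_tendsto (fun k => hW k x _ (hyW k))
    (tendsto_apply_apply_of_forall_tendsto hB tendsto_const_nhds hys)

end BilinearLimit

namespace LinearEquiv

variable {R L M : Type*} [CommRing R] [LieRing L] [LieAlgebra R L] [AddCommGroup M] [Module R M]

def lieBracket (e : L ≃ₗ[R] M) : M →ₗ[R] M →ₗ[R] M :=
  LinearMap.mk₂ R (fun x y => e ⁅e.symm x, e.symm y⁆)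
    (fun x₁ x₂ y => by simp [add_lie]) (fun c x y => by simp [smul_lie])
    (fun x y₁ y₂ => by simp [lie_add]) (fun c x y => by simp [lie_smul])

@[simp]
theorem lieBracket_apply (e : L ≃ₗ[R] M) (x y : M) :
    e.lieBracket x y = e ⁅e.symm x, e.symm y⁆ :=
  rfl

theorem lieBracket_mem_map (e : L ≃ₗ[R] M) (I : LieIdeal R L) (x : M) {y : M}
    (hy : y ∈ (I : Submodule R L).map e.toLinearMap) :
    e.lieBracket x y ∈ (I : Submodule R L).map e.toLinearMap := by
  rw [Submodule.mem_map_equiv] at hy ⊢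
  simpa using I.lie_mem hy

theorem lieBracket_eq_zero_of_mem_map (e : L ≃ₗ[R] M) (I : LieIdeal R L) [IsLieAbelian I]
    {x y : M} (hx : x ∈ (I : Submodule R L).map e.toLinearMap)
    (hy : y ∈ (I : Submodule R L).map e.toLinearMap) : e.lieBracket x y = 0 := by
  rw [Submodule.mem_map_equiv] at hx hy
  simpa using congrArg Subtype.val (trivial_lie_zero I I ⟨_, hx⟩ ⟨_, hy⟩)

end LinearEquiv

theorem abelian_ideal_finrank_le_of_contraction_general {L L₀ : Type*} [LieRing L] [LieAlgebra ℝ L] [LieRing L₀] [LieAlgebra ℝ L₀]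
    [Module.Finite ℝ L₀]
    [TopologicalSpace L₀] [IsTopologicalAddGroup L₀] [ContinuousSMul ℝ L₀] [T2Space L₀]
    (h : IsSequentialContraction L L₀) :
    ∀ I : LieIdeal ℝ L, IsLieAbelian I →
      ∃ I₀ : LieIdeal ℝ L₀, IsLieAbelian I₀ ∧ finrank ℝ I₀ ≥ finrank ℝ I := by
  intro I hI
  obtain ⟨T, hT⟩ := h
  obtain ⟨φ, hφ, V, hVrank, hV⟩ := exists_isSubmoduleLimit_comp_of_finrank_eq
    (fun p => (I : Submodule ℝ L).map (T p).toLinearMap) fun p => (T p).finrank_map_eq I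
  have hB : ∀ x y, Tendsto (fun p => (T (φ p)).lieBracket x y) atTop
      (𝓝 (LieAlgebra.ad ℝ L₀ x y)) := fun x y => (hT x y).comp hφ.tendsto_atTop
  let I₀ : LieIdeal ℝ L₀ :=
    { V with
      lie_mem := fun {x _} hm => hV.apply_mem hB (fun p => (T (φ p)).lieBracket_mem_map I) x hm }
  refine ⟨I₀, ⟨fun a b => Subtype.ext ?_⟩, hVrank.ge⟩
  exact hV.apply_eq_zero hB
    (fun p _ hx _ hy => (T (φ p)).lieBracket_eq_zero_of_mem_map I hx hy) a.2 b.2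

/-- Under a sequential contraction, the maximal dimension of an abelian ideal does not
decrease. -/
theorem abelian_ideal_finrank_le_of_contraction {L L₀ : Type*} [LieRing L] [LieAlgebra ℝ L] [LieRing L₀] [LieAlgebra ℝ L₀]
    [Module.Finite ℝ L] [Module.Finite ℝ L₀]
    [TopologicalSpace L₀] [IsTopologicalAddGroup L₀] [ContinuousSMul ℝ L₀] [T2Space L₀]
    (h : IsSequentialContraction L L₀) :
    ∀ I : LieIdeal ℝ L, IsLieAbelian I →
      ∃ I₀ : LieIdeal ℝ L₀, IsLieAbelian I₀ ∧ finrank ℝ I₀ ≥ finrank ℝ I :=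
  abelian_ideal_finrank_le_of_contraction_general h
end

section
/- Suppose L₀ is a sequential contraction of L. Then the rank of the Lie algebra (the dimension of Cartan subalgebras, equal to the order of the zero root of the generic characteristic polynomial of the adjoint representation) does not decrease: LieAlgebra.rank ℝ L₀ ≥ LieAlgebra.rank ℝ L. -/
/-!
Pick a regular element `x` of `L₀`, so that the trailing degree of the characteristic polynomial
of `ad x` is `rank L₀`. The operators `T p ∘ ad ((T p)⁻¹ x) ∘ (T p)⁻¹` converge pointwise to
`ad x`, and each has the same characteristic polynomial as `ad ((T p)⁻¹ x)`, whose coefficients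
below degree `rank L` vanish. The coefficients of a characteristic polynomial are polynomial,
hence continuous, functions of the matrix entries, so the coefficients of `charpoly (ad x)` below
degree `rank L` vanish as well.
-/

open Filter Module

open Polynomial Topology

theorem Matrix.continuous_charpoly_coeff {n R : Type*} [Fintype n] [DecidableEq n] [CommRing R]
    [TopologicalSpace R] [IsTopologicalRing R] (i : ℕ) :
    Continuous fun M : Matrix n n R => M.charpoly.coeff i := by
  have h (M : Matrix n n R) : M.charpoly.coeff i =
      MvPolynomial.eval (fun ij => M ij.1 ij.2) ((charpoly.univ R n).coeff i) := by
    rw [MvPolynomial.eval, charpoly.univ_coeff_eval₂Hom]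
    rfl
  simp only [h]
  exact (MvPolynomial.continuous_eval _).comp (by fun_prop)

section

variable {𝕜 V ι : Type*} [NontriviallyNormedField 𝕜] [CompleteSpace 𝕜] [AddCommGroup V]
  [Module 𝕜 V] [Module.Finite 𝕜 V] [TopologicalSpace V] [IsTopologicalAddGroup V]
  [ContinuousSMul 𝕜 V] [T2Space V] {l : Filter ι} {f : ι → Module.End 𝕜 V} {g : Module.End 𝕜 V}

theorem LinearMap.tendsto_charpoly_coeff (hf : ∀ v, Tendsto (fun p => f p v) l (𝓝 (g v)))
    (i : ℕ) : Tendsto (fun p => (f p).charpoly.coeff i) l (𝓝 (g.charpoly.coeff i)) := by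
  let b := Module.finBasis 𝕜 V
  have hmat : Tendsto (fun p => toMatrix b b (f p)) l (𝓝 (toMatrix b b g)) := by
    refine tendsto_pi_nhds.2 fun k => tendsto_pi_nhds.2 fun j => ?_
    simp only [toMatrix_apply]
    exact ((b.coord k).continuous_of_finiteDimensional.tendsto _).comp (hf (b j))
  simpa only [Function.comp_def, charpoly_toMatrix] using
    ((Matrix.continuous_charpoly_coeff i).tendsto _).comp hmat

theorem LinearMap.le_natTrailingDegree_charpoly_of_tendsto [l.NeBot]
    (hf : ∀ v, Tendsto (fun p => f p v) l (𝓝 (g v))) {r : ℕ}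
    (hr : ∀ᶠ p in l, r ≤ (f p).charpoly.natTrailingDegree) :
    r ≤ g.charpoly.natTrailingDegree := by
  refine le_natTrailingDegree (charpoly_monic g).ne_zero fun i hi => ?_
  refine tendsto_nhds_unique (tendsto_charpoly_coeff hf i) (tendsto_const_nhds.congr' ?_)
  filter_upwards [hr] with p hp
  exact (coeff_eq_zero_of_lt_natTrailingDegree (hi.trans_le hp)).symm

end

/-- Under a sequential contraction, the rank of the Lie algebra (the dimension of Cartan
subalgebras) does not decrease. -/
theorem lieAlgebra_rank_le_of_contraction {L L₀ : Type*} [LieRing L] [LieAlgebra ℝ L] [LieRing L₀] [LieAlgebra ℝ L₀]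
    [Module.Finite ℝ L] [Module.Finite ℝ L₀]
    [TopologicalSpace L₀] [IsTopologicalAddGroup L₀] [ContinuousSMul ℝ L₀] [T2Space L₀]
    (h : IsSequentialContraction L L₀) :
    LieAlgebra.rank ℝ L₀ ≥ LieAlgebra.rank ℝ L := by
  obtain ⟨T, hT⟩ := h
  obtain ⟨x, hx⟩ := LieAlgebra.exists_isRegular ℝ L₀
  rw [ge_iff_le, ← (LieAlgebra.isRegular_iff_natTrailingDegree_charpoly_eq_rank ℝ x).mp hx]
  refine LinearMap.le_natTrailingDegree_charpoly_of_tendsto (l := atTop)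
    (f := fun p => (T p).conj (LieAlgebra.ad ℝ L ((T p).symm x))) (fun v => ?_)
    (.of_forall fun p => ?_)
  · simpa [LinearEquiv.conj_apply] using hT x v
  · rw [LinearEquiv.charpoly_conj]
    exact LieAlgebra.rank_le_natTrailingDegree_charpoly_ad ℝ _
end

section
/- Suppose L₀ is a sequential contraction of L. Then the maximal rank of the adjoint representation does not increase: for every x : L₀ there exists y : L with finrank ℝ (LinearMap.range (LieAlgebra.ad ℝ L₀ x)) ≤ finrank ℝ (LinearMap.range (LieAlgebra.ad ℝ L y)). Likewise the maximal rank of the coadjoint representation does not increase: for every linear functional f : L₀ →ₗ[ℝ] ℝ there exists a linear functional g : L →ₗ[ℝ] ℝ such that the rank of the bilinear form (x, y) ↦ f ⁅x, y⁆ on L₀ is at most the rank of the bilinear form (x, y) ↦ g ⁅x, y⁆ on L (rank of a bilinear form B meaning finrank of the range of the associated linear map x ↦ B(x, ·)). -/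
open Filter Module

attribute [local instance] LieRing.ofAssociativeRing

/-- The bilinear form `(x, y) ↦ f ⁅x, y⁆` associated with a linear functional `f`, viewed as a
linear map into the dual space. -/
noncomputable def coadForm {L : Type*} [LieRing L] [LieAlgebra ℝ L] (f : L →ₗ[ℝ] ℝ) :
    L →ₗ[ℝ] (L →ₗ[ℝ] ℝ) :=
  (LinearMap.llcomp ℝ L L ℝ f) ∘ₗ (LieAlgebra.ad ℝ L).toLinearMap

open Topology

/-!
Rank is lower semicontinuous: a linearly independent family in a finite-dimensional space stays
independent under small perturbations, so if linear maps `B p` converge pointwise to `A`, then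
eventually `rank A ≤ rank (B p)`. Transporting `ad ((T p)⁻¹ x)` by `T p` gives maps converging
to `ad x` and of the same rank; likewise `(u, v) ↦ f (T p ⁅(T p)⁻¹ u, (T p)⁻¹ v⁆)` converges
to `(u, v) ↦ f ⁅u, v⁆` and has the rank of the coadjoint form of `g = f ∘ T p`.
-/

theorem LinearEquiv.finrank_range_comp {R M N N' : Type*} [Ring R] [AddCommGroup M] [Module R M]
    [AddCommGroup N] [Module R N] [AddCommGroup N'] [Module R N'] (e : N ≃ₗ[R] N')
    (f : M →ₗ[R] N) :
    finrank R (LinearMap.range (e.toLinearMap ∘ₗ f)) = finrank R (LinearMap.range f) := by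
  rw [LinearMap.range_comp, e.finrank_map_eq]

section Semicontinuity

variable {𝕜 E : Type*} [NontriviallyNormedField 𝕜] [CompleteSpace 𝕜]
  [AddCommGroup E] [Module 𝕜 E] [TopologicalSpace E] [IsTopologicalAddGroup E]
  [ContinuousSMul 𝕜 E] [T2Space E] [FiniteDimensional 𝕜 E]

theorem LinearIndependent.eventually_nhds {ι : Type*} [Finite ι] {f : ι → E}
    (hf : LinearIndependent 𝕜 f) : ∀ᶠ g in 𝓝 f, LinearIndependent 𝕜 g := by
  let e := (Module.finBasis 𝕜 E).equivFun.toContinuousLinearEquiv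
  have hcont : Continuous fun g : ι → E => e ∘ g := by fun_prop
  filter_upwards [hcont.tendsto f (hf.map' _ e.toLinearEquiv.ker).eventually] with g hg
  exact hg.of_comp (e : E →ₗ[𝕜] Fin (finrank 𝕜 E) → 𝕜)

theorem LinearMap.eventually_finrank_range_le_of_tendsto {M α : Type*} [AddCommGroup M]
    [Module 𝕜 M] {l : Filter α} (A : M →ₗ[𝕜] E) (B : α → M →ₗ[𝕜] E)
    (h : ∀ v, Tendsto (fun p => B p v) l (𝓝 (A v))) :
    ∀ᶠ p in l, finrank 𝕜 (range A) ≤ finrank 𝕜 (range (B p)) := by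
  let w := Module.finBasis 𝕜 (range A)
  choose v hv using fun i => mem_range.mp (w i).2
  have hAv : LinearIndependent 𝕜 fun i => A (v i) := by
    rw [show (fun i => A (v i)) = (range A).subtype ∘ w from funext hv]
    exact w.linearIndependent.map' _ (range A).ker_subtype
  have hBv : Tendsto (fun p i => B p (v i)) l (𝓝 fun i => A (v i)) :=
    tendsto_pi_nhds.mpr fun i => h (v i)
  filter_upwards [hBv.eventually hAv.eventually_nhds] with p hp
  have hp' : LinearIndependent 𝕜 fun i => (⟨B p (v i), mem_range_self _ _⟩ : range (B p)) :=
    hp.of_comp (range (B p)).subtype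
  simpa using hp'.fintype_card_le_finrank

theorem LinearMap.eventually_finrank_range_le_of_tendsto_apply {M N α : Type*}
    [AddCommGroup M] [Module 𝕜 M] [AddCommGroup N] [Module 𝕜 N] [FiniteDimensional 𝕜 N]
    {l : Filter α} (A : M →ₗ[𝕜] Module.Dual 𝕜 N) (B : α → M →ₗ[𝕜] Module.Dual 𝕜 N)
    (h : ∀ v u, Tendsto (fun p => B p v u) l (𝓝 (A v u))) :
    ∀ᶠ p in l, finrank 𝕜 (range A) ≤ finrank 𝕜 (range (B p)) := by
  let b := Module.finBasis 𝕜 N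
  let e := b.dualBasis.equivFun
  have hconv :
      ∀ v, Tendsto (fun p => (e.toLinearMap ∘ₗ B p) v) l (𝓝 ((e.toLinearMap ∘ₗ A) v)) := by
    refine fun v => tendsto_pi_nhds.mpr fun i => ?_
    simpa [e, Basis.dualBasis_equivFun] using h v (b i)
  simpa only [LinearEquiv.finrank_range_comp] using
    eventually_finrank_range_le_of_tendsto _ _ hconv

end Semicontinuity

theorem rank_ad_coad_le_of_contraction_general {L L₀ : Type*} [LieRing L] [LieAlgebra ℝ L] [LieRing L₀] [LieAlgebra ℝ L₀]
    [Module.Finite ℝ L₀]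
    [TopologicalSpace L₀] [IsTopologicalAddGroup L₀] [ContinuousSMul ℝ L₀] [T2Space L₀]
    (h : IsSequentialContraction L L₀) :
    (∀ x : L₀, ∃ y : L,
      finrank ℝ (LinearMap.range (LieAlgebra.ad ℝ L₀ x)) ≤
        finrank ℝ (LinearMap.range (LieAlgebra.ad ℝ L y))) ∧
    (∀ f : L₀ →ₗ[ℝ] ℝ, ∃ g : L →ₗ[ℝ] ℝ,
      finrank ℝ (LinearMap.range (coadForm f)) ≤ finrank ℝ (LinearMap.range (coadForm g))) := by
  obtain ⟨T, hT⟩ := h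
  constructor
  · intro x
    obtain ⟨p, hp⟩ := (LinearMap.eventually_finrank_range_le_of_tendsto (LieAlgebra.ad ℝ L₀ x)
      (fun p => (T p).conj (LieAlgebra.ad ℝ L ((T p).symm x)))
      (fun v => by simpa [LinearEquiv.conj_apply] using hT x v)).exists
    refine ⟨(T p).symm x, hp.trans_eq ?_⟩
    rw [LinearEquiv.conj_apply, LinearEquiv.range_comp, LinearEquiv.finrank_range_comp]
  · intro f
    obtain ⟨p, hp⟩ := (LinearMap.eventually_finrank_range_le_of_tendsto_apply (coadForm f)
      (fun p => (T p).symm.dualMap ∘ₗ coadForm (f ∘ₗ (T p).toLinearMap) ∘ₗ (T p).symm.toLinearMap)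
      (fun v u => by
        simpa [coadForm, Function.comp_def] using
          (f.continuous_of_finiteDimensional.tendsto _).comp (hT v u))).exists
    refine ⟨f ∘ₗ (T p).toLinearMap, hp.trans_eq ?_⟩
    rw [LinearEquiv.finrank_range_comp, LinearEquiv.range_comp]

/-- Under a sequential contraction, the maximal rank of the adjoint representation and the
maximal rank of the coadjoint representation do not increase. -/
theorem rank_ad_coad_le_of_contraction {L L₀ : Type*} [LieRing L] [LieAlgebra ℝ L] [LieRing L₀] [LieAlgebra ℝ L₀]
    [Module.Finite ℝ L] [Module.Finite ℝ L₀]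
    [TopologicalSpace L₀] [IsTopologicalAddGroup L₀] [ContinuousSMul ℝ L₀] [T2Space L₀]
    (h : IsSequentialContraction L L₀) :
    (∀ x : L₀, ∃ y : L,
      finrank ℝ (LinearMap.range (LieAlgebra.ad ℝ L₀ x)) ≤
        finrank ℝ (LinearMap.range (LieAlgebra.ad ℝ L y))) ∧
    (∀ f : L₀ →ₗ[ℝ] ℝ, ∃ g : L →ₗ[ℝ] ℝ,
      finrank ℝ (LinearMap.range (coadForm f)) ≤ finrank ℝ (LinearMap.range (coadForm g))) :=
  rank_ad_coad_le_of_contraction_general h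
end

section
/- Suppose L₀ is a sequential contraction of L. Then the rank of the Killing form does not increase: finrank ℝ (LinearMap.range (killingForm ℝ L₀)) ≤ finrank ℝ (LinearMap.range (killingForm ℝ L)), where the Killing form is viewed as a linear map from the Lie algebra to its dual. -/
open Filter Module

/-
Transporting the Killing form of `L` along `T p` gives bilinear forms
`κ_L((T p)⁻¹ x, (T p)⁻¹ y)` on `L₀` of the same rank as `κ_L`. Each is the trace of a product of
two transported `ad`-maps, and these converge pointwise to the `ad`-maps of `L₀`, so the forms
converge pointwise to `κ_{L₀}`. The rank of a bilinear form is lower semicontinuous, because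
linear independence of finitely many vectors of a finite-dimensional normed space is an open
condition; hence eventually the rank of `κ_L` is at least that of `κ_{L₀}`.
-/

open Topology

theorem Filter.Tendsto.matrix_trace_mul {ι n R : Type*} [Fintype n] [Semiring R]
    [TopologicalSpace R] [IsTopologicalSemiring R] {l : Filter ι} {A B : ι → Matrix n n R}
    {A₀ B₀ : Matrix n n R} (hA : Tendsto A l (𝓝 A₀)) (hB : Tendsto B l (𝓝 B₀)) :
    Tendsto (fun p => (A p * B p).trace) l (𝓝 (A₀ * B₀).trace) :=
  (((continuous_fst.matrix_mul continuous_snd).matrix_trace.tendsto (A₀, B₀)).comp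
    (hA.prodMk_nhds hB) :)

namespace LinearMap

section Rank

variable {K V M : Type*} [DivisionRing K] [AddCommGroup V] [Module K V] [AddCommGroup M]
  [Module K M]

theorem exists_linearIndependent_comp (f : V →ₗ[K] M) [FiniteDimensional K (range f)] :
    ∃ x : Fin (finrank K (range f)) → V, LinearIndependent K (f ∘ x) := by
  let c := finBasis K (range f)
  choose x hx using fun i => mem_range.1 (c i).2
  have hfx : f ∘ x = (range f).subtype ∘ c := funext hx
  exact ⟨x, hfx ▸ c.linearIndependent.map' _ (range f).ker_subtype⟩

theorem card_le_finrank_range_of_linearIndependent_comp {ι : Type*} [Fintype ι]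
    (f : V →ₗ[K] M) [FiniteDimensional K (range f)] {x : ι → V}
    (hx : LinearIndependent K (f ∘ x)) : Fintype.card ι ≤ finrank K (range f) :=
  (LinearIndependent.of_comp (range f).subtype (v := f.rangeRestrict ∘ x) hx
    ).fintype_card_le_finrank

end Rank

theorem finrank_range_compl₁₂_linearEquiv {R M N M' N' : Type*} [CommRing R]
    [AddCommGroup M] [Module R M] [AddCommGroup N] [Module R N]
    [AddCommGroup M'] [Module R M'] [AddCommGroup N'] [Module R N']
    (B : M →ₗ[R] N →ₗ[R] R) (e₁ : M' ≃ₗ[R] M) (e₂ : N' ≃ₗ[R] N) :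
    finrank R (range (B.compl₁₂ (e₁ : M' →ₗ[R] M) (e₂ : N' →ₗ[R] N))) = finrank R (range B) := by
  have hB : B.compl₁₂ (e₁ : M' →ₗ[R] M) (e₂ : N' →ₗ[R] N) =
      (e₂.dualMap : Dual R N →ₗ[R] Dual R N') ∘ₗ B ∘ₗ (e₁ : M' →ₗ[R] M) := rfl
  rw [hB, range_comp, range_comp_of_range_eq_top _ (LinearEquiv.range e₁),
    LinearEquiv.finrank_map_eq]

section Topological

variable {𝕜 ι : Type*} [NontriviallyNormedField 𝕜] [CompleteSpace 𝕜] {l : Filter ι}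

theorem eventually_finrank_range_le_of_tendsto_s10 {V W : Type*} [AddCommGroup V] [Module 𝕜 V]
    [AddCommGroup W] [Module 𝕜 W] [FiniteDimensional 𝕜 W]
    {B : ι → V →ₗ[𝕜] W →ₗ[𝕜] 𝕜} {B₀ : V →ₗ[𝕜] W →ₗ[𝕜] 𝕜}
    (hB : ∀ x y, Tendsto (fun p => B p x y) l (𝓝 (B₀ x y))) :
    ∀ᶠ p in l, finrank 𝕜 (range B₀) ≤ finrank 𝕜 (range (B p)) := by
  obtain ⟨x, hx⟩ := B₀.exists_linearIndependent_comp
  -- coordinates on `Dual 𝕜 W` put the functionals `B p (x i)` in a normed space, where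
  -- linear independence of a finite family is an open condition
  set ev := (finBasis 𝕜 W).dualBasis.equivFun with hev
  have hlim : Tendsto (fun p => ev ∘ B p ∘ x) l (𝓝 (ev ∘ B₀ ∘ x)) :=
    tendsto_pi_nhds.2 fun i => tendsto_pi_nhds.2 fun j => by
      simpa only [Function.comp_apply, hev, Basis.dualBasis_equivFun] using hB (x i) _
  filter_upwards [hlim.eventually (hx.map' _ ev.ker).eventually] with p hp
  simpa only [Fintype.card_fin] using
    (B p).card_le_finrank_range_of_linearIndependent_comp (hp.of_comp ev.toLinearMap)

section Trace

variable {V : Type*} [AddCommGroup V] [Module 𝕜 V] [FiniteDimensional 𝕜 V]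
  [TopologicalSpace V] [IsTopologicalAddGroup V] [ContinuousSMul 𝕜 V] [T2Space V]

theorem tendsto_toMatrix_of_tendsto_apply {n : Type*} [Fintype n] [DecidableEq n]
    (b : Basis n 𝕜 V) {f : ι → End 𝕜 V} {f₀ : End 𝕜 V}
    (hf : ∀ v, Tendsto (fun p => f p v) l (𝓝 (f₀ v))) :
    Tendsto (fun p => toMatrix b b (f p)) l (𝓝 (toMatrix b b f₀)) :=
  tendsto_pi_nhds.2 fun i => tendsto_pi_nhds.2 fun j => by
    simpa only [toMatrix_apply, Basis.coord_apply, Function.comp_def] using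
      ((b.coord i).continuous_of_finiteDimensional.tendsto _).comp (hf (b j))

theorem tendsto_trace_comp_of_tendsto_apply {f g : ι → End 𝕜 V} {f₀ g₀ : End 𝕜 V}
    (hf : ∀ v, Tendsto (fun p => f p v) l (𝓝 (f₀ v)))
    (hg : ∀ v, Tendsto (fun p => g p v) l (𝓝 (g₀ v))) :
    Tendsto (fun p => trace 𝕜 V (f p ∘ₗ g p)) l (𝓝 (trace 𝕜 V (f₀ ∘ₗ g₀))) := by
  classical
  let b := finBasis 𝕜 V
  simp only [trace_eq_matrix_trace 𝕜 b, toMatrix_comp b b b]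
  exact (tendsto_toMatrix_of_tendsto_apply b hf).matrix_trace_mul
    (tendsto_toMatrix_of_tendsto_apply b hg)

end Trace

end Topological

end LinearMap

theorem tendsto_killingForm_symm_apply {𝕜 ι L L₀ : Type*} [NontriviallyNormedField 𝕜]
    [CompleteSpace 𝕜] [LieRing L] [LieAlgebra 𝕜 L] [LieRing L₀] [LieAlgebra 𝕜 L₀] [FiniteDimensional 𝕜 L₀]
    [TopologicalSpace L₀] [IsTopologicalAddGroup L₀] [ContinuousSMul 𝕜 L₀] [T2Space L₀]
    {l : Filter ι} {e : ι → L ≃ₗ[𝕜] L₀}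
    (he : ∀ x y : L₀, Tendsto (fun p => e p ⁅(e p).symm x, (e p).symm y⁆) l (𝓝 ⁅x, y⁆))
    (x y : L₀) :
    Tendsto (fun p => killingForm 𝕜 L ((e p).symm x) ((e p).symm y)) l
      (𝓝 (killingForm 𝕜 L₀ x y)) := by
  have hconj : ∀ p, killingForm 𝕜 L ((e p).symm x) ((e p).symm y) =
      LinearMap.trace 𝕜 L₀ ((e p).conj (LieAlgebra.ad 𝕜 L ((e p).symm x)) ∘ₗ
        (e p).conj (LieAlgebra.ad 𝕜 L ((e p).symm y))) := fun p => by
    rw [← LinearEquiv.conj_comp, LinearMap.trace_conj', killingForm_apply_apply]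
  simp only [hconj, killingForm_apply_apply]
  exact LinearMap.tendsto_trace_comp_of_tendsto_apply (fun z => by simpa using he x z)
    (fun z => by simpa using he y z)

theorem killingForm_rank_le_of_contraction_general {L L₀ : Type*} [LieRing L] [LieAlgebra ℝ L] [LieRing L₀] [LieAlgebra ℝ L₀]
    [Module.Finite ℝ L₀]
    [TopologicalSpace L₀] [IsTopologicalAddGroup L₀] [ContinuousSMul ℝ L₀] [T2Space L₀]
    (h : IsSequentialContraction L L₀) :
    finrank ℝ (LinearMap.range (killingForm ℝ L₀)) ≤
      finrank ℝ (LinearMap.range (killingForm ℝ L)) := by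
  obtain ⟨T, hT⟩ := h
  let B p := (killingForm ℝ L).compl₁₂ ((T p).symm : L₀ →ₗ[ℝ] L) ((T p).symm : L₀ →ₗ[ℝ] L)
  obtain ⟨p, hp⟩ := (LinearMap.eventually_finrank_range_le_of_tendsto_s10 (B := B)
    (tendsto_killingForm_symm_apply hT)).exists
  exact hp.trans_eq (LinearMap.finrank_range_compl₁₂_linearEquiv _ _ _)

/-- Under a sequential contraction, the rank of the Killing form does not increase. -/
theorem killingForm_rank_le_of_contraction {L L₀ : Type*} [LieRing L] [LieAlgebra ℝ L] [LieRing L₀] [LieAlgebra ℝ L₀]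
    [Module.Finite ℝ L] [Module.Finite ℝ L₀]
    [TopologicalSpace L₀] [IsTopologicalAddGroup L₀] [ContinuousSMul ℝ L₀] [T2Space L₀]
    (h : IsSequentialContraction L L₀) :
    finrank ℝ (LinearMap.range (killingForm ℝ L₀)) ≤
      finrank ℝ (LinearMap.range (killingForm ℝ L)) :=
  killingForm_rank_le_of_contraction_general h
end

section
/- Suppose L₀ is a sequential contraction of L, and fix l : ℕ with l ≥ 1. If L is l-unimodular, i.e. the trace of (ad x)^l vanishes for every x : L, then L₀ is l-unimodular: for every x : L₀, LinearMap.trace ℝ L₀ ((LieAlgebra.ad ℝ L₀ x) ^ l) = 0. (The case l = 1 is the statement that a sequential contraction of a unimodular Lie algebra is unimodular.) -/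
open Filter Module Topology

/-!
The transported adjoint maps `T p ∘ ad ((T p)⁻¹ x) ∘ (T p)⁻¹` converge pointwise to `ad x`.
In finite dimension pointwise convergence of endomorphisms is convergence of their matrices,
and `A ↦ trace (A ^ l)` is continuous, so `trace ((ad x) ^ l)` is the limit of
`trace ((ad ((T p)⁻¹ x)) ^ l) = 0`, conjugation leaving the trace of a power unchanged.
-/

section FiniteDimensional

variable {𝕜 : Type*} [NontriviallyNormedField 𝕜] [CompleteSpace 𝕜]
  {M₁ M₂ : Type*} [AddCommGroup M₁] [Module 𝕜 M₁] [AddCommGroup M₂] [Module 𝕜 M₂]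
  [TopologicalSpace M₂] [IsTopologicalAddGroup M₂] [ContinuousSMul 𝕜 M₂] [T2Space M₂]
  [FiniteDimensional 𝕜 M₂] {α : Type*} {F : Filter α}

theorem LinearMap.tendsto_toMatrix_of_tendsto_apply_s11 {m n : Type*} [Fintype m] [DecidableEq m]
    [Fintype n] (b₁ : Basis m 𝕜 M₁) (b₂ : Basis n 𝕜 M₂) {f : α → M₁ →ₗ[𝕜] M₂}
    {g : M₁ →ₗ[𝕜] M₂} (h : ∀ y, Tendsto (fun a => f a y) F (𝓝 (g y))) :
    Tendsto (fun a => toMatrix b₁ b₂ (f a)) F (𝓝 (toMatrix b₁ b₂ g)) := by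
  refine tendsto_pi_nhds.mpr fun i => tendsto_pi_nhds.mpr fun j => ?_
  simp only [toMatrix_apply]
  exact ((b₂.coord i).continuous_of_finiteDimensional.tendsto _).comp (h (b₁ j))

theorem LinearMap.tendsto_trace_pow_of_tendsto_apply {f : α → Module.End 𝕜 M₂}
    {g : Module.End 𝕜 M₂} (h : ∀ y, Tendsto (fun a => f a y) F (𝓝 (g y))) (l : ℕ) :
    Tendsto (fun a => trace 𝕜 M₂ (f a ^ l)) F (𝓝 (trace 𝕜 M₂ (g ^ l))) := by
  let b := Module.finBasis 𝕜 M₂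
  have trace_pow_eq (φ : Module.End 𝕜 M₂) :
      trace 𝕜 M₂ (φ ^ l) = (toMatrix b b φ ^ l).trace := by
    rw [trace_eq_matrix_trace 𝕜 b]
    exact congrArg _ (map_pow (toMatrixAlgEquiv b) φ l)
  simp only [trace_pow_eq]
  exact ((continuous_pow l).matrix_trace.tendsto _).comp
    (tendsto_toMatrix_of_tendsto_apply_s11 b b h)

end FiniteDimensional

theorem LinearMap.trace_conj_pow {R M N : Type*} [CommRing R] [AddCommGroup M] [Module R M]
    [AddCommGroup N] [Module R N] (e : M ≃ₗ[R] N) (f : Module.End R M) (l : ℕ) :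
    trace R N (e.conj f ^ l) = trace R M (f ^ l) := by
  rw [← trace_conj' (f ^ l) e]
  exact congrArg _ (map_pow (e.conjAlgEquiv R) f l).symm

theorem tendsto_conj_ad_apply_of_tendsto_bracket {L L₀ : Type*} [LieRing L] [LieAlgebra ℝ L]
    [LieRing L₀] [LieAlgebra ℝ L₀] [TopologicalSpace L₀] {T : ℕ → (L ≃ₗ[ℝ] L₀)}
    (hT : ∀ x y : L₀, Tendsto (fun p => T p ⁅(T p).symm x, (T p).symm y⁆) atTop (𝓝 ⁅x, y⁆))
    (x y : L₀) :
    Tendsto (fun p => (T p).conj (LieAlgebra.ad ℝ L ((T p).symm x)) y) atTop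
      (𝓝 (LieAlgebra.ad ℝ L₀ x y)) := by
  simpa [LinearEquiv.conj_apply] using hT x y

theorem unimodular_of_contraction_general {L L₀ : Type*} [LieRing L] [LieAlgebra ℝ L] [LieRing L₀] [LieAlgebra ℝ L₀]
    [Module.Finite ℝ L₀]
    [TopologicalSpace L₀] [IsTopologicalAddGroup L₀] [ContinuousSMul ℝ L₀] [T2Space L₀]
    (h : IsSequentialContraction L L₀)
    (l : ℕ)
    (hL : ∀ x : L, LinearMap.trace ℝ L ((LieAlgebra.ad ℝ L x) ^ l) = 0) :
    ∀ x : L₀, LinearMap.trace ℝ L₀ ((LieAlgebra.ad ℝ L₀ x) ^ l) = 0 := by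
  obtain ⟨T, hT⟩ := h
  intro x
  have hlim := LinearMap.tendsto_trace_pow_of_tendsto_apply
    (tendsto_conj_ad_apply_of_tendsto_bracket hT x) l
  simp only [LinearMap.trace_conj_pow, hL] at hlim
  exact tendsto_nhds_unique tendsto_const_nhds hlim |>.symm

/-- A sequential contraction of an `l`-unimodular Lie algebra is `l`-unimodular. -/
theorem unimodular_of_contraction {L L₀ : Type*} [LieRing L] [LieAlgebra ℝ L] [LieRing L₀] [LieAlgebra ℝ L₀]
    [Module.Finite ℝ L] [Module.Finite ℝ L₀]
    [TopologicalSpace L₀] [IsTopologicalAddGroup L₀] [ContinuousSMul ℝ L₀] [T2Space L₀]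
    (h : IsSequentialContraction L L₀)
    (l : ℕ) (hl : 1 ≤ l)
    (hL : ∀ x : L, LinearMap.trace ℝ L ((LieAlgebra.ad ℝ L x) ^ l) = 0) :
    ∀ x : L₀, LinearMap.trace ℝ L₀ ((LieAlgebra.ad ℝ L₀ x) ^ l) = 0 :=
  unimodular_of_contraction_general h l hL
end

section
/- Suppose L₀ is a sequential contraction of L. If L is solvable then L₀ is solvable; moreover the solvability rank does not increase, in the precise form: for every l : ℕ, if LieAlgebra.derivedSeries ℝ L l = ⊥ then LieAlgebra.derivedSeries ℝ L₀ l = ⊥. -/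
open Filter Module

/-!
By induction on `l`, every element of the `l`-th derived algebra of `L₀` is a limit of
`T p (w p)` with `w p` in the `l`-th derived algebra of `L`. The inductive step passes from
`a, b` to `⁅a, b⁆` because, in finite dimension, pointwise convergence of the transported
brackets upgrades to joint convergence in both arguments (expand in a basis). Hence if the
`l`-th derived algebra of `L` vanishes, every element of that of `L₀` is a limit of zeros.
-/

open Topology

lemma LinearMap.eq_sum_basis_smul {R M N P ι κ : Type*} [CommSemiring R] [AddCommMonoid M]
    [AddCommMonoid N] [AddCommMonoid P] [Module R M] [Module R N] [Module R P]
    [Fintype ι] [Fintype κ] (b : Basis ι R M) (c : Basis κ R N)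
    (B : M →ₗ[R] N →ₗ[R] P) (x : M) (y : N) :
    B x y = ∑ i, ∑ j, (b.repr x i * c.repr y j) • B (b i) (c j) := by
  rw [← LinearMap.sum_repr_mul_repr_mul b c x y]
  simp [Finsupp.sum_fintype, mul_smul]

lemma tendsto_apply₂_of_tendsto_pointwise {𝕜 ι M N P : Type*} [NontriviallyNormedField 𝕜] [CompleteSpace 𝕜]
    {F : Filter ι}
    [AddCommGroup M] [Module 𝕜 M] [TopologicalSpace M] [IsTopologicalAddGroup M]
    [ContinuousSMul 𝕜 M] [T2Space M] [FiniteDimensional 𝕜 M]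
    [AddCommGroup N] [Module 𝕜 N] [TopologicalSpace N] [IsTopologicalAddGroup N]
    [ContinuousSMul 𝕜 N] [T2Space N] [FiniteDimensional 𝕜 N]
    [AddCommGroup P] [Module 𝕜 P] [TopologicalSpace P] [ContinuousAdd P] [ContinuousSMul 𝕜 P]
    {B : ι → M →ₗ[𝕜] N →ₗ[𝕜] P} {C : M →ₗ[𝕜] N →ₗ[𝕜] P}
    (hB : ∀ x y, Tendsto (fun p => B p x y) F (𝓝 (C x y)))
    {u : ι → M} {v : ι → N} {a : M} {b : N} (hu : Tendsto u F (𝓝 a)) (hv : Tendsto v F (𝓝 b)) :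
    Tendsto (fun p => B p (u p) (v p)) F (𝓝 (C a b)) := by
  let e := finBasis 𝕜 M
  let f := finBasis 𝕜 N
  have hexpand : (fun p => B p (u p) (v p)) = fun p =>
      ∑ i, ∑ j, (e.repr (u p) i * f.repr (v p) j) • B p (e i) (f j) :=
    funext fun p => (B p).eq_sum_basis_smul e f _ _
  rw [hexpand, C.eq_sum_basis_smul e f]
  refine tendsto_finsetSum _ fun i _ => tendsto_finsetSum _ fun j _ => ?_
  have he := ((e.coord i).continuous_of_finiteDimensional.tendsto a).comp hu
  have hf := ((f.coord j).continuous_of_finiteDimensional.tendsto b).comp hv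
  exact (he.mul hf).smul (hB (e i) (f j))

def Submodule.transportLimits {R ι M N : Type*} [Semiring R] [TopologicalSpace R]
    [AddCommMonoid M] [Module R M] [AddCommMonoid N] [Module R N] [TopologicalSpace N]
    [ContinuousAdd N] [ContinuousSMul R N]
    (T : ι → M ≃ₗ[R] N) (F : Filter ι) (S : Submodule R M) : Submodule R N where
  carrier := {x | ∃ w : ι → M, (∀ p, w p ∈ S) ∧ Tendsto (fun p => T p (w p)) F (𝓝 x)}
  zero_mem' := ⟨0, fun _ => S.zero_mem, by simpa using tendsto_const_nhds⟩
  add_mem' := by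
    rintro x y ⟨v, hvS, hv⟩ ⟨w, hwS, hw⟩
    exact ⟨v + w, fun p => S.add_mem (hvS p) (hwS p), by simpa using hv.add hw⟩
  smul_mem' := by
    rintro c x ⟨w, hwS, hw⟩
    exact ⟨c • w, fun p => S.smul_mem c (hwS p), by simpa using hw.const_smul c⟩

lemma Submodule.transportLimits_bot {R ι M N : Type*} [Semiring R] [TopologicalSpace R]
    {F : Filter ι} [F.NeBot] [AddCommMonoid M] [Module R M] [AddCommMonoid N] [Module R N]
    [TopologicalSpace N] [ContinuousAdd N] [ContinuousSMul R N] [T2Space N]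
    (T : ι → M ≃ₗ[R] N) :
    transportLimits T F ⊥ = ⊥ := by
  refine eq_bot_iff.mpr fun x ⟨w, hw, hx⟩ => ?_
  simp only [mem_bot] at hw ⊢
  simp only [hw, map_zero] at hx
  exact tendsto_nhds_unique hx tendsto_const_nhds

def LinearEquiv.transportedBracket {R L L₀ : Type*} [CommRing R] [LieRing L] [LieAlgebra R L]
    [AddCommGroup L₀] [Module R L₀] (e : L ≃ₗ[R] L₀) : L₀ →ₗ[R] L₀ →ₗ[R] L₀ :=
  ((LieAlgebra.ad R L : L →ₗ[R] L →ₗ[R] L).compl₁₂ e.symm.toLinearMap e.symm.toLinearMap).compr₂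
    e.toLinearMap

@[simp]
lemma LinearEquiv.transportedBracket_apply {R L L₀ : Type*} [CommRing R] [LieRing L]
    [LieAlgebra R L] [AddCommGroup L₀] [Module R L₀] (e : L ≃ₗ[R] L₀) (x y : L₀) :
    e.transportedBracket x y = e ⁅e.symm x, e.symm y⁆ := rfl

lemma derivedSeries_le_transportLimits {𝕜 ι L L₀ : Type*} [NontriviallyNormedField 𝕜]
    [CompleteSpace 𝕜] [LieRing L] [LieAlgebra 𝕜 L] [LieRing L₀] [LieAlgebra 𝕜 L₀]
    [FiniteDimensional 𝕜 L₀] [TopologicalSpace L₀] [IsTopologicalAddGroup L₀]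
    [ContinuousSMul 𝕜 L₀] [T2Space L₀] {F : Filter ι} {T : ι → L ≃ₗ[𝕜] L₀}
    (hT : ∀ x y : L₀, Tendsto (fun p => T p ⁅(T p).symm x, (T p).symm y⁆) F (𝓝 ⁅x, y⁆))
    (k : ℕ) :
    (LieAlgebra.derivedSeries 𝕜 L₀ k).toSubmodule ≤
      (LieAlgebra.derivedSeries 𝕜 L k).toSubmodule.transportLimits T F := by
  induction k with
  | zero =>
    exact fun x _ => ⟨fun p => (T p).symm x, fun _ => trivial, by simpa using tendsto_const_nhds⟩
  | succ k ih =>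
    simp only [LieAlgebra.derivedSeriesOfIdeal_succ, LieSubmodule.lieIdeal_oper_eq_linear_span',
      Submodule.span_le]
    rintro _ ⟨a, ha, b, hb, rfl⟩
    obtain ⟨u, huS, hu⟩ := ih ha
    obtain ⟨v, hvS, hv⟩ := ih hb
    refine ⟨fun p => ⁅u p, v p⁆, fun p => Submodule.subset_span ⟨u p, huS p, v p, hvS p, rfl⟩, ?_⟩
    simpa using tendsto_apply₂_of_tendsto_pointwise (B := fun p => (T p).transportedBracket)
      (C := (LieAlgebra.ad 𝕜 L₀ : L₀ →ₗ[𝕜] L₀ →ₗ[𝕜] L₀)) hT hu hv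

theorem solvable_of_contraction_general {L L₀ : Type*} [LieRing L] [LieAlgebra ℝ L] [LieRing L₀] [LieAlgebra ℝ L₀]
    [Module.Finite ℝ L₀]
    [TopologicalSpace L₀] [IsTopologicalAddGroup L₀] [ContinuousSMul ℝ L₀] [T2Space L₀]
    (h : IsSequentialContraction L L₀) :
    (LieAlgebra.IsSolvable L → LieAlgebra.IsSolvable L₀) ∧
    (∀ l : ℕ, LieAlgebra.derivedSeries ℝ L l = ⊥ → LieAlgebra.derivedSeries ℝ L₀ l = ⊥) := by
  obtain ⟨T, hT⟩ := h
  have rank_le (l : ℕ) (hl : LieAlgebra.derivedSeries ℝ L l = ⊥) :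
      LieAlgebra.derivedSeries ℝ L₀ l = ⊥ := by
    have := derivedSeries_le_transportLimits hT l
    rw [hl, LieSubmodule.bot_toSubmodule, Submodule.transportLimits_bot] at this
    exact (LieSubmodule.toSubmodule_eq_bot _).mp (le_bot_iff.mp this)
  refine ⟨fun hL => ?_, rank_le⟩
  obtain ⟨l, hl⟩ := (LieAlgebra.isSolvable_iff ℝ L).mp hL
  exact (LieAlgebra.isSolvable_iff ℝ L₀).mpr ⟨l, rank_le l hl⟩

/-- Under a sequential contraction, solvability is preserved and the solvability rank does not
increase. -/
theorem solvable_of_contraction {L L₀ : Type*} [LieRing L] [LieAlgebra ℝ L] [LieRing L₀] [LieAlgebra ℝ L₀]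
    [Module.Finite ℝ L] [Module.Finite ℝ L₀]
    [TopologicalSpace L₀] [IsTopologicalAddGroup L₀] [ContinuousSMul ℝ L₀] [T2Space L₀]
    (h : IsSequentialContraction L L₀) :
    (LieAlgebra.IsSolvable L → LieAlgebra.IsSolvable L₀) ∧
    (∀ l : ℕ, LieAlgebra.derivedSeries ℝ L l = ⊥ → LieAlgebra.derivedSeries ℝ L₀ l = ⊥) :=
  solvable_of_contraction_general h
end

section
/- Suppose L₀ is a sequential contraction of L. If L is nilpotent then L₀ is nilpotent; moreover the nilpotency rank does not increase, in the precise form: for every l : ℕ, if lowerCentralSeries ℝ L L l = ⊥ then lowerCentralSeries ℝ L₀ L₀ l = ⊥. -/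
/-!
The transported brackets `T p ⁅(T p).symm x, (T p).symm y⁆` have adjoint operators
`(T p).conjRingEquiv (ad ((T p).symm x))`, so any product of `l` of them is conjugate to a product
of `l` adjoint operators of `L` and vanishes once the `l`-th term of the lower central series of
`L` does. In finite dimension, pointwise convergence of linear maps passes to products, so these
products converge to the corresponding products of adjoint operators of `L₀`, which therefore
vanish as well; and the `l`-th term of the lower central series is exactly what such products
of length `l` sweep out.
-/

open Filter Module

open Topology

section Pointwise

variable {ι 𝕜 V W : Type*} [NontriviallyNormedField 𝕜] [CompleteSpace 𝕜]
  [AddCommGroup V] [Module 𝕜 V] [FiniteDimensional 𝕜 V] [TopologicalSpace V]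
  [IsTopologicalAddGroup V] [ContinuousSMul 𝕜 V] [T2Space V]
  [AddCommGroup W] [Module 𝕜 W] [TopologicalSpace W]
  [IsTopologicalAddGroup W] [ContinuousSMul 𝕜 W] {l : Filter ι}

theorem tendsto_apply_of_tendsto_pointwise {f : ι → V →ₗ[𝕜] W} {g : V →ₗ[𝕜] W}
    (hf : ∀ v, Tendsto (fun i => f i v) l (𝓝 (g v))) {v : ι → V} {v₀ : V}
    (hv : Tendsto v l (𝓝 v₀)) : Tendsto (fun i => f i (v i)) l (𝓝 (g v₀)) := by
  let b := Module.finBasis 𝕜 V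
  have expand : ∀ (f : V →ₗ[𝕜] W) (u : V), f u = ∑ j, b.repr u j • f (b j) := fun f u => by
    conv_lhs => rw [← b.sum_repr u]
    simp only [map_sum, map_smul]
  rw [funext fun i => expand (f i) (v i), expand g]
  refine tendsto_finsetSum _ fun j _ => Tendsto.smul ?_ (hf (b j))
  exact ((b.coord j).continuous_of_finiteDimensional.tendsto v₀).comp hv

theorem tendsto_list_prod_apply_of_tendsto_pointwise {α : Type*}
    {F : ι → α → Module.End 𝕜 V} {φ : α → Module.End 𝕜 V}
    (hF : ∀ a v, Tendsto (fun i => F i a v) l (𝓝 (φ a v))) (as : List α) (v : V) :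
    Tendsto (fun i => (as.map (F i)).prod v) l (𝓝 ((as.map φ).prod v)) := by
  induction as with
  | nil => exact tendsto_const_nhds
  | cons a as ih => exact tendsto_apply_of_tendsto_pointwise (hF a) ih

end Pointwise

namespace LieModule

variable {R L M : Type*} [CommRing R] [LieRing L] [LieAlgebra R L]
  [AddCommGroup M] [Module R M] [LieRingModule L M] [LieModule R L M]

theorem lowerCentralSeries_le_iff_forall_list_prod {k : ℕ} {N : LieSubmodule R L M} :
    lowerCentralSeries R L M k ≤ N ↔
      ∀ xs : List L, xs.length = k → ∀ m, (xs.map (toEnd R L M)).prod m ∈ N := by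
  induction k generalizing N with
  | zero => simp [SetLike.le_def]
  | succ k ih =>
    rw [lowerCentralSeries_succ, LieSubmodule.top_lie_le_iff_le_normalizer, ih]
    simp only [LieSubmodule.mem_normalizer]
    constructor
    · rintro h (_ | ⟨x, xs⟩) hxs m
      · simp at hxs
      · exact h xs (by simpa using hxs) m x
    · intro h xs hxs m x
      exact h (x :: xs) (by simp [hxs]) m

theorem lowerCentralSeries_eq_bot_iff_forall_list_prod {k : ℕ} :
    lowerCentralSeries R L M k = ⊥ ↔
      ∀ xs : List L, xs.length = k → (xs.map (toEnd R L M)).prod = 0 := by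
  rw [← le_bot_iff, lowerCentralSeries_le_iff_forall_list_prod]
  simp [LinearMap.ext_iff]

end LieModule

open LieModule in
theorem IsSequentialContraction.lowerCentralSeries_eq_bot {L L₀ : Type*} [LieRing L]
    [LieAlgebra ℝ L] [LieRing L₀] [LieAlgebra ℝ L₀] [Module.Finite ℝ L₀] [TopologicalSpace L₀]
    [IsTopologicalAddGroup L₀] [ContinuousSMul ℝ L₀] [T2Space L₀]
    (h : IsSequentialContraction L L₀) {l : ℕ} (hl : lowerCentralSeries ℝ L L l = ⊥) :
    lowerCentralSeries ℝ L₀ L₀ l = ⊥ := by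
  obtain ⟨T, hT⟩ := h
  rw [lowerCentralSeries_eq_bot_iff_forall_list_prod] at hl ⊢
  intro xs hxs
  ext v
  let F : ℕ → L₀ → Module.End ℝ L₀ := fun p x =>
    (T p).conjRingEquiv (toEnd ℝ L L ((T p).symm x))
  have hF_prod : ∀ p, (xs.map (F p)).prod = 0 := fun p => by
    have : xs.map (F p) = ((xs.map (T p).symm).map (toEnd ℝ L L)).map (T p).conjRingEquiv := by
      simp only [List.map_map]; rfl
    rw [this, ← map_list_prod, hl _ (by simpa using hxs), map_zero]
  have hlim := tendsto_list_prod_apply_of_tendsto_pointwise (F := F) (φ := toEnd ℝ L₀ L₀)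
    hT xs v
  simp only [hF_prod, LinearMap.zero_apply] at hlim
  exact tendsto_nhds_unique hlim tendsto_const_nhds

open LieModule in
theorem nilpotent_of_contraction_general {L L₀ : Type*} [LieRing L] [LieAlgebra ℝ L] [LieRing L₀] [LieAlgebra ℝ L₀]
    [Module.Finite ℝ L₀]
    [TopologicalSpace L₀] [IsTopologicalAddGroup L₀] [ContinuousSMul ℝ L₀] [T2Space L₀]
    (h : IsSequentialContraction L L₀) :
    (LieRing.IsNilpotent L → LieRing.IsNilpotent L₀) ∧
    (∀ l : ℕ, lowerCentralSeries ℝ L L l = ⊥ → lowerCentralSeries ℝ L₀ L₀ l = ⊥) := by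
  refine ⟨fun hL => ?_, fun _ => h.lowerCentralSeries_eq_bot⟩
  obtain ⟨k, hk⟩ := (isNilpotent_iff ℝ L L).mp hL
  exact (isNilpotent_iff ℝ L₀ L₀).mpr ⟨k, h.lowerCentralSeries_eq_bot hk⟩

open LieModule in
/-- Under a sequential contraction, nilpotency is preserved and the nilpotency rank does not
increase. -/
theorem nilpotent_of_contraction {L L₀ : Type*} [LieRing L] [LieAlgebra ℝ L] [LieRing L₀] [LieAlgebra ℝ L₀]
    [Module.Finite ℝ L] [Module.Finite ℝ L₀]
    [TopologicalSpace L₀] [IsTopologicalAddGroup L₀] [ContinuousSMul ℝ L₀] [T2Space L₀]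
    (h : IsSequentialContraction L L₀) :
    (LieRing.IsNilpotent L → LieRing.IsNilpotent L₀) ∧
    (∀ l : ℕ, lowerCentralSeries ℝ L L l = ⊥ → lowerCentralSeries ℝ L₀ L₀ l = ⊥) :=
  nilpotent_of_contraction_general h
end

section
/- Let g be a finite-dimensional Lie algebra over a field K, let I be a Lie ideal of g which is abelian and has codimension one (finrank K I + 1 = finrank K g), and let e : g with e ∉ I. Since I is an ideal, ad e maps I into itself; let A : I →ₗ[K] I denote this restriction of ad e. Every u : g can be written uniquely as u = w + c • e with w ∈ I and c ∈ K. Then for all integers p, q ≥ 1 and all u = w + c • e, v = w' + d • e in g: (i) trace((ad u)^p) = c^p · trace(A^p); and (ii) trace((ad u)^p ∘ (ad v)^q) = c^p · d^q · trace(A^(p+q)). Consequently, when tr(A^p), tr(A^q), tr(A^(p+q)) are nonzero, the invariant 𝔠_{pq} of the almost Abelian algebra g equals tr(A^p)·tr(A^q)/tr(A^(p+q)). -/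
open Module

/-- Traces of powers of adjoint operators in an almost Abelian Lie algebra: if `I` is an abelian
ideal of codimension one, `e ∉ I`, and `A` is the restriction of `ad e` to `I`, then for
`u = w + c • e` and `v = w' + d • e` one has `tr((ad u)^p) = c^p tr(A^p)`,
`tr((ad u)^p ∘ (ad v)^q) = c^p d^q tr(A^(p+q))`, and consequently the invariant `𝔠_{pq}` equals
`tr(A^p) tr(A^q) / tr(A^(p+q))` whenever everything is well defined. -/
theorem almostAbelian_trace_ad_pow {K : Type*} [Field K] {g : Type*} [LieRing g]
    [LieAlgebra K g] [Module.Finite K g]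
    (I : LieIdeal K g) (hab : IsLieAbelian I)
    (hcodim : finrank K I + 1 = finrank K g)
    (e : g) (he : e ∉ I)
    (A : Module.End K I) (hA : ∀ x : I, (A x : g) = ⁅e, (x : g)⁆)
    (p q : ℕ) (hp : 1 ≤ p) (hq : 1 ≤ q) :
    (∀ (u : g) (w : I) (c : K), u = (w : g) + c • e →
      LinearMap.trace K g ((LieAlgebra.ad K g u) ^ p) = c ^ p * LinearMap.trace K I (A ^ p)) ∧
    (∀ (u v : g) (w w' : I) (c d : K), u = (w : g) + c • e → v = (w' : g) + d • e →
      LinearMap.trace K g ((LieAlgebra.ad K g u) ^ p * (LieAlgebra.ad K g v) ^ q) =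
        c ^ p * d ^ q * LinearMap.trace K I (A ^ (p + q))) ∧
    (LinearMap.trace K I (A ^ p) ≠ 0 → LinearMap.trace K I (A ^ q) ≠ 0 →
      LinearMap.trace K I (A ^ (p + q)) ≠ 0 →
      ∀ (u v : g) (w w' : I) (c d : K), u = (w : g) + c • e → v = (w' : g) + d • e →
        LinearMap.trace K g ((LieAlgebra.ad K g u) ^ p) ≠ 0 →
        LinearMap.trace K g ((LieAlgebra.ad K g v) ^ q) ≠ 0 →
        LinearMap.trace K g ((LieAlgebra.ad K g u) ^ p * (LieAlgebra.ad K g v) ^ q) ≠ 0 →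
        LinearMap.trace K g ((LieAlgebra.ad K g u) ^ p) *
            LinearMap.trace K g ((LieAlgebra.ad K g v) ^ q) /
            LinearMap.trace K g ((LieAlgebra.ad K g u) ^ p * (LieAlgebra.ad K g v) ^ q) =
          LinearMap.trace K I (A ^ p) * LinearMap.trace K I (A ^ q) /
            LinearMap.trace K I (A ^ (p + q))) := by
  classical
  have hFD : FiniteDimensional K g := ‹Module.Finite K g›
  -- `g = I ⊕ K e`
  have htop : I.toSubmodule ⊔ (K ∙ e) = ⊤ := by
    apply Submodule.eq_top_of_finrank_eq
    have h1 : I.toSubmodule < I.toSubmodule ⊔ (K ∙ e) := by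
      refine lt_of_le_of_ne le_sup_left ?_
      intro h
      exact he (h ▸ (le_sup_right : (K ∙ e) ≤ _) (Submodule.mem_span_singleton_self e) :
        e ∈ I.toSubmodule)
    have h2 := Submodule.finrank_lt_finrank_of_lt h1
    have h3 := Submodule.finrank_le (I.toSubmodule ⊔ (K ∙ e))
    have h4 : finrank K I = finrank K I.toSubmodule := rfl
    omega
  have hdecomp : ∀ x : g, ∃ (a : g) (t : K), a ∈ I ∧ x = a + t • e := by
    intro x
    have hx : x ∈ I.toSubmodule ⊔ (K ∙ e) := htop ▸ Submodule.mem_top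
    obtain ⟨a, ha, b, hb, rfl⟩ := Submodule.mem_sup.mp hx
    obtain ⟨t, rfl⟩ := Submodule.mem_span_singleton.mp hb
    exact ⟨a, t, ha, rfl⟩
  -- all brackets lie in I
  have hbr : ∀ x y : g, ⁅x, y⁆ ∈ I := by
    intro x y
    obtain ⟨a, t, ha, rfl⟩ := hdecomp y
    obtain ⟨b, s, hb, rfl⟩ := hdecomp x
    rw [lie_add, lie_smul]
    refine add_mem (lie_mem_right K g I _ a ha) (Submodule.smul_mem I.toSubmodule t ?_)
    rw [add_lie, smul_lie, lie_self, smul_zero, add_zero]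
    exact lie_mem_left K g I b e hb
  set adm := LieAlgebra.ad K g with hadm
  have hmapsto : ∀ u : g, ∀ x ∈ I.toSubmodule, adm u x ∈ I.toSubmodule := fun u x _ => hbr u x
  -- bracket of two elements of I vanishes
  have hzero : ∀ w x : I, ⁅(w : g), (x : g)⁆ = 0 := by
    intro w x
    have h : (⁅w, x⁆ : I) = 0 := trivial_lie_zero _ _ w x
    have h2 : ((⁅w, x⁆ : I) : g) = ⁅(w : g), (x : g)⁆ := rfl
    rw [← h2, h, ZeroMemClass.coe_zero]
  -- the restriction of `ad u` to `I` is `c • A`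
  have hrest : ∀ (u : g) (w : I) (c : K), u = (w : g) + c • e →
      (adm u).restrict (hmapsto u) = c • A := by
    intro u w c hu
    ext x
    have : ((adm u).restrict (hmapsto u) x : g) = ⁅u, (x : g)⁆ := rfl
    rw [this, hu, add_lie, smul_lie, hzero w x, zero_add]
    exact (congrArg (fun y => c • y) (hA x)).symm
  -- trace over g equals trace of the restriction to I
  have htr : ∀ (f : Module.End K g) (hf : ∀ x, f x ∈ I.toSubmodule)
      (hf' : ∀ x ∈ I.toSubmodule, f x ∈ I.toSubmodule),
      LinearMap.trace K g f = LinearMap.trace K I (f.restrict hf') :=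
    fun f hf hf' => (LinearMap.trace_restrict_eq_of_forall_mem I.toSubmodule f hf hf').symm
  -- key lemma: part (i) for arbitrary exponent
  have key : ∀ n, 1 ≤ n → ∀ (u : g) (w : I) (c : K), u = (w : g) + c • e →
      LinearMap.trace K g ((adm u) ^ n) = c ^ n * LinearMap.trace K I (A ^ n) := by
    intro n hn u w c hu
    obtain ⟨m, rfl⟩ : ∃ m, n = m + 1 := ⟨n - 1, by omega⟩
    have hf : ∀ x, ((adm u) ^ (m + 1)) x ∈ I.toSubmodule := by
      intro x
      rw [pow_succ', Module.End.mul_apply]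
      exact hbr u _
    have hf' : ∀ x ∈ I.toSubmodule, ((adm u) ^ (m + 1)) x ∈ I.toSubmodule := fun x _ => hf x
    rw [htr _ hf hf', ← Module.End.pow_restrict _ (hmapsto u), hrest u w c hu, smul_pow,
      map_smul, smul_eq_mul]
  refine ⟨fun u w c hu => key p hp u w c hu, ?_, ?_⟩
  · -- part (ii)
    intro u v w w' c d hu hv
    have hf : ∀ x, ((adm u) ^ p * (adm v) ^ q) x ∈ I.toSubmodule := by
      intro x
      obtain ⟨m, rfl⟩ : ∃ m, p = m + 1 := ⟨p - 1, by omega⟩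
      rw [Module.End.mul_apply, pow_succ', Module.End.mul_apply]
      exact hbr u _
    have hf' : ∀ x ∈ I.toSubmodule, ((adm u) ^ p * (adm v) ^ q) x ∈ I.toSubmodule :=
      fun x _ => hf x
    have hu' : ∀ x ∈ I.toSubmodule, ((adm u) ^ p) x ∈ I.toSubmodule := by
      intro x hx
      obtain ⟨m, rfl⟩ : ∃ m, p = m + 1 := ⟨p - 1, by omega⟩
      rw [pow_succ', Module.End.mul_apply]
      exact hbr u _
    have hv' : ∀ x ∈ I.toSubmodule, ((adm v) ^ q) x ∈ I.toSubmodule := by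
      intro x hx
      obtain ⟨m, rfl⟩ : ∃ m, q = m + 1 := ⟨q - 1, by omega⟩
      rw [pow_succ', Module.End.mul_apply]
      exact hbr v _
    have hsplit : ((adm u) ^ p * (adm v) ^ q).restrict hf' =
        (((adm u) ^ p).restrict hu') * (((adm v) ^ q).restrict hv') := by
      ext x
      rfl
    rw [htr _ hf hf', hsplit, ← Module.End.pow_restrict _ (hmapsto u),
      ← Module.End.pow_restrict _ (hmapsto v), hrest u w c hu, hrest v w' d hv,
      smul_pow, smul_pow, smul_mul_assoc, mul_smul_comm, smul_smul, ← pow_add,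
      map_smul, smul_eq_mul]
  · -- part (iii)
    intro _ _ _ u v w w' c d hu hv h1 h2 h3
    have e1 := key p hp u w c hu
    have e2 := key q hq v w' d hv
    have e3 : LinearMap.trace K g ((adm u) ^ p * (adm v) ^ q) =
        c ^ p * d ^ q * LinearMap.trace K I (A ^ (p + q)) := by
      -- reuse part (ii) proof: easiest to restate via the same computation
      have hf : ∀ x, ((adm u) ^ p * (adm v) ^ q) x ∈ I.toSubmodule := by
        intro x
        obtain ⟨m, hm⟩ : ∃ m, p = m + 1 := ⟨p - 1, by omega⟩
        rw [hm, Module.End.mul_apply, pow_succ', Module.End.mul_apply]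
        exact hbr u _
      have hf' : ∀ x ∈ I.toSubmodule, ((adm u) ^ p * (adm v) ^ q) x ∈ I.toSubmodule :=
        fun x _ => hf x
      have hu' : ∀ x ∈ I.toSubmodule, ((adm u) ^ p) x ∈ I.toSubmodule := by
        intro x hx
        obtain ⟨m, hm⟩ : ∃ m, p = m + 1 := ⟨p - 1, by omega⟩
        rw [hm, pow_succ', Module.End.mul_apply]
        exact hbr u _
      have hv' : ∀ x ∈ I.toSubmodule, ((adm v) ^ q) x ∈ I.toSubmodule := by
        intro x hx
        obtain ⟨m, hm⟩ : ∃ m, q = m + 1 := ⟨q - 1, by omega⟩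
        rw [hm, pow_succ', Module.End.mul_apply]
        exact hbr v _
      have hsplit : ((adm u) ^ p * (adm v) ^ q).restrict hf' =
          (((adm u) ^ p).restrict hu') * (((adm v) ^ q).restrict hv') := by
        ext x
        rfl
      rw [htr _ hf hf', hsplit, ← Module.End.pow_restrict _ (hmapsto u),
        ← Module.End.pow_restrict _ (hmapsto v), hrest u w c hu, hrest v w' d hv,
        smul_pow, smul_pow, smul_mul_assoc, mul_smul_comm, smul_smul, ← pow_add,
        map_smul, smul_eq_mul]
    rw [e1, e2, e3]
    rw [e3] at h3
    have hc : c ^ p ≠ 0 := fun h => h3 (by rw [h]; ring)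
    have hd : d ^ q ≠ 0 := fun h => h3 (by rw [h]; ring)
    have hApq : LinearMap.trace K I (A ^ (p + q)) ≠ 0 := fun h => h3 (by rw [h]; ring)
    field_simp
end

section
/- Let L be a Lie algebra over ℝ, finite-dimensional with a basis b : Basis (Fin n) ℝ L, and carrying the canonical topology of a finite-dimensional real vector space. Let c i j k := (b.repr ⁅b i, b j⁆) k be its structure constants and let α : Fin n → ℤ. For ε > 0 let U ε be the linear automorphism of L with U ε (b i) = ε^(α i) • b i. Then: (1) the limit as ε → 0⁺ (along 𝓝[>] 0) of (U ε)⁻¹ ⁅U ε x, U ε y⁆ exists for all x, y ∈ L if and only if for all i, j, k, c i j k ≠ 0 implies α k ≤ α i + α j; and (2) in that case, the limit defines a bilinear map μ₀ : L →ₗ[ℝ] L →ₗ[ℝ] L which is antisymmetric, satisfies the Jacobi identity, and whose structure constants are (b.repr (μ₀ (b i) (b j))) k = c i j k when α i + α j = α k and 0 otherwise. -/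
/-!
In the basis `b`, the transported bracket `(U ε)⁻¹ ⁅U ε x, U ε y⁆` has structure constants
`c i j k * ε ^ (α i + α j - α k)`. Such a coefficient has a limit as `ε → 0⁺` exactly when it
vanishes or its exponent is nonnegative, and the limit is `c i j k` or `0` according as the exponent
is zero or positive; by bilinearity, convergence on pairs of basis vectors gives convergence
everywhere. Each transported bracket is a Lie bracket, and antisymmetry and the Jacobi identity
survive the limit because, in finite dimension, pointwise convergence of linear maps may be
combined with convergence of their argument.
-/

open Filter Topology

open scoped Pointwise in
theorem tendsto_const_mul_zpow_nhdsGT_zero_iff {𝕜 : Type*} [Field 𝕜] [LinearOrder 𝕜]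
    [IsStrictOrderedRing 𝕜] [TopologicalSpace 𝕜] [OrderTopology 𝕜] {m : ℤ} {c d : 𝕜}
    (hc : c ≠ 0) :
    Tendsto (fun ε : 𝕜 => c * ε ^ m) (𝓝[>] 0) (𝓝 d) ↔ m = 0 ∧ c = d ∨ 0 < m ∧ d = 0 := by
  rw [← inv_atTop₀, ← Filter.map_inv, tendsto_map'_iff]
  have : ((fun ε : 𝕜 => c * ε ^ m) ∘ Inv.inv) = fun x => c * x ^ (-m) := by
    funext x; simp [inv_zpow']
  rw [this, tendsto_const_mul_zpow_atTop_nhds_iff hc]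
  simp only [neg_eq_zero, Left.neg_neg_iff]

theorem tendsto_const_mul_zpow_nhdsGT_zero {𝕜 : Type*} [Field 𝕜] [LinearOrder 𝕜]
    [IsStrictOrderedRing 𝕜] [TopologicalSpace 𝕜] [OrderTopology 𝕜] {m : ℤ} {c : 𝕜}
    (hm : c ≠ 0 → 0 ≤ m) :
    Tendsto (fun ε : 𝕜 => c * ε ^ m) (𝓝[>] 0) (𝓝 (if m = 0 then c else 0)) := by
  rcases eq_or_ne c 0 with rfl | hc
  · simp
  · rw [tendsto_const_mul_zpow_nhdsGT_zero_iff hc]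
    rcases (hm hc).eq_or_lt with h | h
    · simp [← h]
    · simp [h, h.ne']

section PointwiseLimits

variable {X ι R M N : Type*} {l : Filter X}

theorem Module.Basis.tendsto_apply_of_tendsto_apply_basis [Fintype ι] [Semiring R]
    [AddCommMonoid M] [Module R M] [AddCommMonoid N] [Module R N] [TopologicalSpace N]
    [ContinuousAdd N] [ContinuousConstSMul R N] (b : Module.Basis ι R M)
    {f : X → M →ₗ[R] N} {g : M →ₗ[R] N}
    (h : ∀ i, Tendsto (fun t => f t (b i)) l (𝓝 (g (b i)))) (x : M) :
    Tendsto (fun t => f t x) l (𝓝 (g x)) := by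
  rw [← b.sum_repr x]
  simp only [map_sum, map_smul]
  exact tendsto_finsetSum _ fun i _ => (h i).const_smul _

theorem Module.Basis.tendsto_apply₂_of_tendsto_apply₂_basis [Fintype ι] [CommSemiring R]
    [AddCommMonoid M] [Module R M] [AddCommMonoid N] [Module R N] [TopologicalSpace N]
    [ContinuousAdd N] [ContinuousConstSMul R N] (b : Module.Basis ι R M)
    {B : X → M →ₗ[R] M →ₗ[R] N} {B₀ : M →ₗ[R] M →ₗ[R] N}
    (h : ∀ i j, Tendsto (fun t => B t (b i) (b j)) l (𝓝 (B₀ (b i) (b j)))) (x y : M) :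
    Tendsto (fun t => B t x y) l (𝓝 (B₀ x y)) :=
  b.tendsto_apply_of_tendsto_apply_basis (f := fun t => (B t).flip y) (g := B₀.flip y)
    (fun i => b.tendsto_apply_of_tendsto_apply_basis (h i) y) x

theorem antisymm_of_tendsto [l.NeBot] [CommSemiring R] [AddCommGroup M] [Module R M]
    [TopologicalSpace M] [ContinuousNeg M] [T2Space M]
    {B : X → M →ₗ[R] M →ₗ[R] M} {B₀ : M →ₗ[R] M →ₗ[R] M}
    (hB : ∀ x y, Tendsto (fun t => B t x y) l (𝓝 (B₀ x y)))
    (hanti : ∀ t x y, B t x y = - B t y x) (x y : M) : B₀ x y = - B₀ y x :=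
  tendsto_nhds_unique (hB x y) ((hB y x).neg.congr fun t => (hanti t x y).symm)

variable {𝕜 : Type*} [NontriviallyNormedField 𝕜] [CompleteSpace 𝕜]
  [AddCommGroup M] [Module 𝕜 M] [TopologicalSpace M] [IsTopologicalAddGroup M]
  [ContinuousSMul 𝕜 M] [T2Space M] [FiniteDimensional 𝕜 M]

theorem tendsto_apply_of_tendsto_apply_of_tendsto [AddCommMonoid N] [Module 𝕜 N]
    [TopologicalSpace N] [ContinuousAdd N] [ContinuousSMul 𝕜 N]
    {f : X → M →ₗ[𝕜] N} {g : M →ₗ[𝕜] N} (hf : ∀ x, Tendsto (fun t => f t x) l (𝓝 (g x)))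
    {a : X → M} {a₀ : M} (ha : Tendsto a l (𝓝 a₀)) :
    Tendsto (fun t => f t (a t)) l (𝓝 (g a₀)) := by
  let b := Module.finBasis 𝕜 M
  have hcoord (i) : Tendsto (fun t => b.repr (a t) i) l (𝓝 (b.repr a₀ i)) :=
    ((b.coord i).continuous_of_finiteDimensional.tendsto a₀).comp ha
  have hexpand (h : M →ₗ[𝕜] N) (x : M) : h x = ∑ i, b.repr x i • h (b i) := by
    conv_lhs => rw [← b.sum_repr x]
    simp only [map_sum, map_smul]
  rw [funext fun t => hexpand (f t) (a t), hexpand g a₀]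
  exact tendsto_finsetSum _ fun i _ => (hcoord i).smul (hf (b i))

theorem jacobi_of_tendsto [l.NeBot] {B : X → M →ₗ[𝕜] M →ₗ[𝕜] M} {B₀ : M →ₗ[𝕜] M →ₗ[𝕜] M}
    (hB : ∀ x y, Tendsto (fun t => B t x y) l (𝓝 (B₀ x y)))
    (hjac : ∀ t x y z, B t (B t x y) z + B t (B t y z) x + B t (B t z x) y = 0) (x y z : M) :
    B₀ (B₀ x y) z + B₀ (B₀ y z) x + B₀ (B₀ z x) y = 0 := by
  have hcomp (x y z : M) : Tendsto (fun t => B t (B t x y) z) l (𝓝 (B₀ (B₀ x y) z)) :=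
    tendsto_apply_of_tendsto_apply_of_tendsto (f := fun t => (B t).flip z) (g := B₀.flip z)
      (fun w => hB w z) (hB x y)
  refine tendsto_nhds_unique (((hcomp x y z).add (hcomp y z x)).add (hcomp z x y)) ?_
  simpa only [hjac] using tendsto_const_nhds

end PointwiseLimits

namespace LieAlgebra

section Transport

variable {R L : Type*} [CommRing R] [LieRing L] [LieAlgebra R L]

def transportedBracket (U : L ≃ₗ[R] L) : L →ₗ[R] L →ₗ[R] L :=
  LinearMap.mk₂ R (fun x y => U.symm ⁅U x, U y⁆)
    (fun x₁ x₂ y => by simp only [map_add, add_lie])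
    (fun r x y => by simp only [map_smul, smul_lie])
    (fun x y₁ y₂ => by simp only [map_add, lie_add])
    (fun r x y => by simp only [map_smul, lie_smul])

@[simp]
theorem transportedBracket_apply (U : L ≃ₗ[R] L) (x y : L) :
    transportedBracket U x y = U.symm ⁅U x, U y⁆ :=
  rfl

theorem transportedBracket_antisymm (U : L ≃ₗ[R] L) (x y : L) :
    transportedBracket U x y = - transportedBracket U y x := by
  simp only [transportedBracket_apply, ← map_neg, lie_skew]

theorem transportedBracket_jacobi (U : L ≃ₗ[R] L) (x y z : L) :
    transportedBracket U (transportedBracket U x y) z +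
      transportedBracket U (transportedBracket U y z) x +
      transportedBracket U (transportedBracket U z x) y = 0 := by
  simp only [transportedBracket_apply, LinearEquiv.apply_symm_apply, ← map_add]
  rw [← lie_skew ⁅U x, U y⁆, ← lie_skew ⁅U y, U z⁆, ← lie_skew ⁅U z, U x⁆, ← neg_add, ← neg_add,
    lie_jacobi, neg_zero, map_zero]

end Transport

section Contraction

variable {ι K L : Type*} [Fintype ι] [Field K] [LieRing L] [LieAlgebra K L]
  (b : Module.Basis ι K L) (α : ι → ℤ)

theorem transportedBracket_basis {U : L ≃ₗ[K] L} {ε : K} (hε : ε ≠ 0)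
    (hU : ∀ i, U (b i) = ε ^ α i • b i) (i j : ι) :
    transportedBracket U (b i) (b j) =
      ∑ k, (b.repr ⁅b i, b j⁆ k * ε ^ (α i + α j - α k)) • b k := by
  have hUsymm (k : ι) : U.symm (b k) = ε ^ (-α k) • b k := by
    rw [LinearEquiv.symm_apply_eq, map_smul, hU, smul_smul, ← zpow_add₀ hε, neg_add_cancel,
      zpow_zero, one_smul]
  conv_lhs => rw [transportedBracket_apply, hU, hU, smul_lie, lie_smul, ← b.sum_repr ⁅b i, b j⁆]
  simp only [Finset.smul_sum, map_sum, map_smul, hUsymm, smul_smul]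
  refine Finset.sum_congr rfl fun k _ => congrArg (· • b k) ?_
  rw [sub_eq_add_neg, zpow_add₀ hε, zpow_add₀ hε]
  ring

noncomputable def contractedBracket : L →ₗ[K] L →ₗ[K] L :=
  b.constr K fun i => b.constr K fun j =>
    ∑ k, (if α i + α j = α k then b.repr ⁅b i, b j⁆ k else 0) • b k

theorem repr_contractedBracket_basis (i j k : ι) :
    b.repr (contractedBracket b α (b i) (b j)) k =
      if α i + α j = α k then b.repr ⁅b i, b j⁆ k else 0 := by
  rw [contractedBracket, Module.Basis.constr_basis, Module.Basis.constr_basis, b.repr_sum_self]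

end Contraction

section Limit

variable {ι 𝕜 L : Type*} [Fintype ι] [Field 𝕜] [LinearOrder 𝕜] [IsStrictOrderedRing 𝕜]
  [TopologicalSpace 𝕜] [OrderTopology 𝕜] [LieRing L] [LieAlgebra 𝕜 L] [TopologicalSpace L]
  [ContinuousAdd L] [ContinuousSMul 𝕜 L] (b : Module.Basis ι 𝕜 L) (α : ι → ℤ)
  {U : 𝕜 → L ≃ₗ[𝕜] L}

theorem tendsto_transportedBracket (hU : ∀ ε : 𝕜, 0 < ε → ∀ i, U ε (b i) = ε ^ α i • b i)
    (hα : ∀ i j k, b.repr ⁅b i, b j⁆ k ≠ 0 → α k ≤ α i + α j) (x y : L) :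
    Tendsto (fun ε => transportedBracket (U ε) x y) (𝓝[>] 0) (𝓝 (contractedBracket b α x y)) := by
  refine b.tendsto_apply₂_of_tendsto_apply₂_basis (fun i j => ?_) x y
  have hcoeff (k : ι) : Tendsto (fun ε : 𝕜 => b.repr ⁅b i, b j⁆ k * ε ^ (α i + α j - α k))
      (𝓝[>] 0) (𝓝 (if α i + α j = α k then b.repr ⁅b i, b j⁆ k else 0)) := by
    simpa only [sub_eq_zero] using
      tendsto_const_mul_zpow_nhdsGT_zero fun hc => sub_nonneg.mpr (hα i j k hc)
  rw [contractedBracket, Module.Basis.constr_basis, Module.Basis.constr_basis]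
  refine (tendsto_finsetSum _ fun k _ => (hcoeff k).smul_const (b k)).congr' ?_
  filter_upwards [self_mem_nhdsWithin] with ε hε
  exact (transportedBracket_basis b α (ne_of_gt hε) (hU ε hε) i j).symm

end Limit

theorem le_of_tendsto_transportedBracket {ι L : Type*} [Fintype ι] [LieRing L]
    [LieAlgebra ℝ L] [TopologicalSpace L] [IsTopologicalAddGroup L] [ContinuousSMul ℝ L]
    [T2Space L] (b : Module.Basis ι ℝ L) (α : ι → ℤ) {U : ℝ → L ≃ₗ[ℝ] L}
    (hU : ∀ ε : ℝ, 0 < ε → ∀ i, U ε (b i) = ε ^ α i • b i) {i j k : ι}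
    {z : L} (hz : Tendsto (fun ε => transportedBracket (U ε) (b i) (b j)) (𝓝[>] 0) (𝓝 z))
    (hc : b.repr ⁅b i, b j⁆ k ≠ 0) : α k ≤ α i + α j := by
  have : FiniteDimensional ℝ L := Module.Finite.of_basis b
  have hk := ((b.coord k).continuous_of_finiteDimensional.tendsto z).comp hz
  have hcoeff : Tendsto (fun ε : ℝ => b.repr ⁅b i, b j⁆ k * ε ^ (α i + α j - α k)) (𝓝[>] 0)
      (𝓝 (b.repr z k)) := by
    refine hk.congr' ?_
    filter_upwards [self_mem_nhdsWithin] with ε hε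
    simp only [Function.comp_apply, Module.Basis.coord_apply,
      transportedBracket_basis b α (ne_of_gt hε) (hU ε hε), b.repr_sum_self]
  rcases (tendsto_const_mul_zpow_nhdsGT_zero_iff hc).mp hcoeff with ⟨h, -⟩ | ⟨h, -⟩ <;> omega

end LieAlgebra

/-- Criterion for existence and form of a generalized Inönü–Wigner contraction with contraction
matrix `diag(ε^(α 1), …, ε^(α n))` in the basis `b`. -/
theorem generalized_IW_contraction_criterion {n : ℕ} {L : Type*} [LieRing L] [LieAlgebra ℝ L]
    [TopologicalSpace L] [IsTopologicalAddGroup L] [ContinuousSMul ℝ L] [T2Space L]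
    (b : Module.Basis (Fin n) ℝ L) (α : Fin n → ℤ)
    (c : Fin n → Fin n → Fin n → ℝ) (hc : ∀ i j k, c i j k = b.repr ⁅b i, b j⁆ k)
    (U : ℝ → (L ≃ₗ[ℝ] L)) (hU : ∀ ε : ℝ, 0 < ε → ∀ i, U ε (b i) = ε ^ (α i) • b i) :
    ((∀ x y : L, ∃ z : L,
        Tendsto (fun ε => (U ε).symm ⁅U ε x, U ε y⁆) (nhdsWithin 0 (Set.Ioi 0)) (nhds z)) ↔
      (∀ i j k, c i j k ≠ 0 → α k ≤ α i + α j)) ∧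
    ((∀ i j k, c i j k ≠ 0 → α k ≤ α i + α j) →
      ∃ μ₀ : L →ₗ[ℝ] L →ₗ[ℝ] L,
        (∀ x y : L,
          Tendsto (fun ε => (U ε).symm ⁅U ε x, U ε y⁆) (nhdsWithin 0 (Set.Ioi 0))
            (nhds (μ₀ x y))) ∧
        (∀ x y : L, μ₀ x y = - μ₀ y x) ∧
        (∀ x y z : L, μ₀ (μ₀ x y) z + μ₀ (μ₀ y z) x + μ₀ (μ₀ z x) y = 0) ∧
        (∀ i j k, b.repr (μ₀ (b i) (b j)) k = if α i + α j = α k then c i j k else 0)) := by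
  have : FiniteDimensional ℝ L := Module.Finite.of_basis b
  obtain rfl : c = fun i j k => b.repr ⁅b i, b j⁆ k :=
    funext fun i => funext fun j => funext (hc i j)
  have hlim := LieAlgebra.tendsto_transportedBracket b α hU
  refine ⟨⟨fun hex i j k hck => ?_, fun hα x y => ⟨_, hlim hα x y⟩⟩,
    fun hα => ⟨LieAlgebra.contractedBracket b α, hlim hα, ?_, ?_,
      LieAlgebra.repr_contractedBracket_basis b α⟩⟩
  · obtain ⟨z, hz⟩ := hex (b i) (b j)
    exact LieAlgebra.le_of_tendsto_transportedBracket b α hU hz hck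
  · exact antisymm_of_tendsto (hlim hα) fun ε => LieAlgebra.transportedBracket_antisymm (U ε)
  · exact jacobi_of_tendsto (hlim hα) fun ε => LieAlgebra.transportedBracket_jacobi (U ε)
end

section
/- Let V be a finite-dimensional normed real vector space, let μ, μ̂, μ̃ : V →ₗ[ℝ] V →ₗ[ℝ] V be bilinear maps (the Lie brackets of three Lie algebra structures 𝔤, 𝔤̂, 𝔤̃ on V), and let Û and Ũ be families of real-linear automorphisms of V indexed by ε ∈ (0,1] such that Û contracts μ to μ̂ and Ũ contracts μ̂ to μ̃. Assume the families are continuous in the contraction parameter, i.e. for each x ∈ V the maps ε ↦ Û ε x, ε ↦ (Û ε).symm x, ε ↦ Ũ ε x and ε ↦ (Ũ ε).symm x are continuous on (0,1]. Then there exists a function f : ℝ → ℝ, continuous and monotone on (0,1], mapping (0,1] into (0,1], with f(ε) → 0 as ε → 0⁺, such that the composite family ε ↦ Û (f ε) ∘ Ũ ε contracts μ to μ̃. -/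
open Filter

/-- The family of automorphisms `U` contracts the bilinear map (Lie bracket) `μ` to `μ'`:
for all `x, y` the transformed bracket tends to `μ' x y` as `ε → 0⁺`. -/
def Contracts {V : Type*} [NormedAddCommGroup V] [NormedSpace ℝ V]
    (U : ℝ → (V ≃ₗ[ℝ] V)) (μ μ' : V →ₗ[ℝ] V →ₗ[ℝ] V) : Prop :=
  ∀ x y : V,
    Tendsto (fun ε => (U ε).symm (μ (U ε x) (U ε y))) (nhdsWithin 0 (Set.Ioi 0))
      (nhds (μ' x y))

/-
Write `μ_δ := Û_δ⁻¹ μ(Û_δ ·, Û_δ ·)`. The bracket of the composite family at `ε` differs from the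
`Ũ_ε`-transform of `μ̂` by `Ũ_ε⁻¹ (μ_{f ε} - μ̂)(Ũ_ε ·, Ũ_ε ·)`, whose size is at most
`C(ε) ‖μ_{f ε} - μ̂‖` times the norms of the arguments, with `C(ε) = ‖Ũ_ε⁻¹‖ ‖Ũ_ε‖²`. In finite
dimension `μ_δ → μ̂` in operator norm, and `C` is continuous, hence bounded on each `[ε, 1]`. So it
suffices that `f ε < m ε`, the supremum of the radii `r` with `C(s) ‖μ_δ - μ̂‖ ≤ ε` for all
`s ∈ [ε, 1]` and `δ < r`; `m` is positive and monotone, and `f ε = ½ ∫₀^ε m` is a continuous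
monotone function below it.
-/

open Set Topology

theorem exists_continuous_monotoneOn_mem_Ioo {m : ℝ → ℝ} (hm : Monotone m)
    (hpos : ∀ ε, 0 < ε → 0 < m ε) :
    ∃ f : ℝ → ℝ, Continuous f ∧ MonotoneOn f (Ioi 0) ∧ f 0 = 0 ∧
      ∀ ε ∈ Ioc 0 1, f ε ∈ Ioo 0 (m ε) := by
  have hint : ∀ a b, IntervalIntegrable m MeasureTheory.volume a b :=
    fun _ _ => hm.intervalIntegrable
  refine ⟨fun ε => (∫ t in 0..ε, m t) / 2,
    (intervalIntegral.continuous_primitive hint 0).div_const 2, ?_, by simp, ?_⟩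
  · intro a ha b _ hab
    have hnonneg : 0 ≤ ∫ t in a..b, m t :=
      intervalIntegral.integral_nonneg hab fun t ht => (hpos t (lt_of_lt_of_le ha ht.1)).le
    dsimp only
    rw [← intervalIntegral.integral_add_adjacent_intervals (hint 0 a) (hint a b)]
    linarith
  · rintro ε ⟨hε, hε1⟩
    have hlower : 0 < ∫ t in 0..ε, m t :=
      intervalIntegral.intervalIntegral_pos_of_pos_on (hint 0 ε) (fun t ht => hpos t ht.1) hε
    have hupper : ∫ t in 0..ε, m t ≤ ε * m ε := by
      calc ∫ t in 0..ε, m t ≤ ∫ _ in 0..ε, m ε :=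
            intervalIntegral.integral_mono_on hε.le (hint 0 ε) intervalIntegrable_const
              fun t ht => hm ht.2
        _ = ε * m ε := by simp
    have hmε := hpos ε hε
    constructor <;> nlinarith

theorem exists_monotone_radius_mul_norm_le {E : Type*} [NormedAddCommGroup E] {C : ℝ → ℝ}
    (hC : ContinuousOn C (Ioc 0 1)) {g : ℝ → E} (hg : Tendsto g (𝓝[>] 0) (𝓝 0)) :
    ∃ m : ℝ → ℝ, Monotone m ∧ (∀ ε, 0 < ε → 0 < m ε) ∧ (∀ ε, m ε ≤ 1) ∧
      ∀ ε ∈ Ioc 0 1, ∀ δ ∈ Ioo 0 (m ε), C ε * ‖g δ‖ ≤ ε := by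
  -- asking for the bound on all of `[ε, 1]` rather than at `ε` alone makes `R` monotone
  set R : ℝ → Set ℝ := fun ε =>
    {r | r ∈ Icc 0 1 ∧ ∀ δ ∈ Ioo 0 r, ∀ s ∈ Icc ε 1, C s * ‖g δ‖ ≤ ε}
  have hbdd : ∀ ε, BddAbove (R ε) := fun ε => ⟨1, fun r hr => hr.1.2⟩
  have hzero : ∀ ε, (0 : ℝ) ∈ R ε := fun ε => ⟨⟨le_rfl, zero_le_one⟩, by simp⟩
  refine ⟨fun ε => sSup (R ε), ?_, ?_, fun ε => csSup_le ⟨0, hzero ε⟩ fun r hr => hr.1.2, ?_⟩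
  · intro ε ε' hεε'
    refine csSup_le_csSup (hbdd ε') ⟨0, hzero ε⟩ fun r ⟨hr, hsmall⟩ => ⟨hr, fun δ hδ s hs => ?_⟩
    exact (hsmall δ hδ s ⟨hεε'.trans hs.1, hs.2⟩).trans hεε'
  · intro ε hε
    obtain ⟨B, hB⟩ := isCompact_Icc.exists_bound_of_continuousOn
      (hC.mono fun s hs => ⟨hε.trans_le hs.1, hs.2⟩ : ContinuousOn C (Icc ε 1))
    have hsmall : ∀ᶠ δ in 𝓝[>] 0, ‖g δ‖ < ε / (|B| + 1) :=
      (tendsto_norm_zero.comp hg).eventually (gt_mem_nhds (by positivity))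
    obtain ⟨u, hu, hsub⟩ := mem_nhdsGT_iff_exists_Ioo_subset.1 hsmall
    have hr : min u 1 ∈ R ε := by
      refine ⟨⟨le_min (le_of_lt hu) zero_le_one, min_le_right _ _⟩, fun δ hδ s hs => ?_⟩
      have hgδ : ‖g δ‖ < ε / (|B| + 1) := hsub ⟨hδ.1, hδ.2.trans_le (min_le_left _ _)⟩
      calc C s * ‖g δ‖ ≤ (|B| + 1) * (ε / (|B| + 1)) := by
            gcongr
            exact (le_abs_self _).trans ((hB s hs).trans ((le_abs_self B).trans (by linarith)))
        _ = ε := by field_simp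
    exact lt_csSup_of_lt (hbdd ε) hr (lt_min hu one_pos)
  · rintro ε ⟨-, hε1⟩ δ ⟨hδ, hδm⟩
    obtain ⟨r, ⟨-, hsmall⟩, hδr⟩ := exists_lt_of_lt_csSup ⟨0, hzero ε⟩ hδm
    exact hsmall δ ⟨hδ, hδr⟩ ε ⟨le_rfl, hε1⟩

theorem exists_reparam_mul_norm_le {E : Type*} [NormedAddCommGroup E] {C : ℝ → ℝ}
    (hC : ContinuousOn C (Ioc 0 1)) {g : ℝ → E} (hg : Tendsto g (𝓝[>] 0) (𝓝 0)) :
    ∃ f : ℝ → ℝ, ContinuousOn f (Ioc 0 1) ∧ MonotoneOn f (Ioc 0 1) ∧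
      MapsTo f (Ioc 0 1) (Ioc 0 1) ∧ Tendsto f (𝓝[>] 0) (𝓝 0) ∧
      ∀ ε ∈ Ioc 0 1, C ε * ‖g (f ε)‖ ≤ ε := by
  obtain ⟨m, hm, hm_pos, hm_le, hm_small⟩ := exists_monotone_radius_mul_norm_le hC hg
  obtain ⟨f, hf, hf_mono, hf0, hf_mem⟩ := exists_continuous_monotoneOn_mem_Ioo hm hm_pos
  refine ⟨f, hf.continuousOn, hf_mono.mono Ioc_subset_Ioi_self,
    fun ε hε => ⟨(hf_mem ε hε).1, ((hf_mem ε hε).2.trans_le (hm_le ε)).le⟩, ?_,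
    fun ε hε => hm_small ε hε (f ε) (hf_mem ε hε)⟩
  simpa [hf0] using (hf.tendsto 0).mono_left nhdsWithin_le_nhds

section FiniteDimensional

variable {𝕜 E F G : Type*} [NontriviallyNormedField 𝕜] [CompleteSpace 𝕜]
  [NormedAddCommGroup E] [NormedSpace 𝕜 E] [FiniteDimensional 𝕜 E]
  [NormedAddCommGroup F] [NormedSpace 𝕜 F] [FiniteDimensional 𝕜 F]
  [NormedAddCommGroup G] [NormedSpace 𝕜 G]

theorem ContinuousLinearMap.tendsto_of_tendsto_apply {α : Type*} {l : Filter α}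
    {A : α → E →L[𝕜] G} {L : E →L[𝕜] G} (h : ∀ x, Tendsto (fun t => A t x) l (𝓝 (L x))) :
    Tendsto A l (𝓝 L) := by
  set b := Module.finBasis 𝕜 E
  obtain ⟨K, -, hK⟩ := b.exists_opNorm_le (F := G)
  have hbasis : Tendsto (fun t => ∑ i, ‖(A t - L) (b i)‖) l (𝓝 0) := by
    simpa using tendsto_finsetSum Finset.univ fun i _ =>
      (tendsto_sub_nhds_zero_iff.2 (h (b i))).norm
  rw [tendsto_iff_norm_sub_tendsto_zero]
  refine squeeze_zero (fun _ => norm_nonneg _)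
    (fun t => hK (Finset.sum_nonneg fun _ _ => norm_nonneg _) fun i => ?_)
    (by simpa using hbasis.const_mul K)
  exact Finset.single_le_sum (f := fun i => ‖(A t - L) (b i)‖) (fun _ _ => norm_nonneg _)
    (Finset.mem_univ i)

theorem ContinuousLinearMap.continuousOn_of_continuousOn_apply {X : Type*} [TopologicalSpace X]
    {s : Set X} {A : X → E →L[𝕜] G} (h : ∀ x, ContinuousOn (fun t => A t x) s) :
    ContinuousOn A s :=
  fun t ht => tendsto_of_tendsto_apply fun x => h x t ht

theorem ContinuousLinearMap.tendsto_of_tendsto_apply₂ {α : Type*} {l : Filter α}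
    {A : α → E →L[𝕜] F →L[𝕜] G} {L : E →L[𝕜] F →L[𝕜] G}
    (h : ∀ x y, Tendsto (fun t => A t x y) l (𝓝 (L x y))) : Tendsto A l (𝓝 L) :=
  tendsto_of_tendsto_apply fun x => tendsto_of_tendsto_apply (h x)

noncomputable def LinearMap.toContinuousBilinear (μ : E →ₗ[𝕜] F →ₗ[𝕜] G) :
    E →L[𝕜] F →L[𝕜] G :=
  LinearMap.toContinuousLinearMap (LinearMap.toContinuousLinearMap.toLinearMap ∘ₗ μ)

@[simp]
theorem LinearMap.toContinuousBilinear_apply (μ : E →ₗ[𝕜] F →ₗ[𝕜] G) (x : E) (y : F) :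
    μ.toContinuousBilinear x y = μ x y :=
  rfl

end FiniteDimensional

section Bracket

variable {V : Type*} [NormedAddCommGroup V] [NormedSpace ℝ V]

def conjBracket (U : V ≃ₗ[ℝ] V) (μ : V →ₗ[ℝ] V →ₗ[ℝ] V) : V →ₗ[ℝ] V →ₗ[ℝ] V :=
  (μ.compl₁₂ U.toLinearMap U.toLinearMap).compr₂ U.symm.toLinearMap

@[simp]
theorem conjBracket_apply (U : V ≃ₗ[ℝ] V) (μ : V →ₗ[ℝ] V →ₗ[ℝ] V) (x y : V) :
    conjBracket U μ x y = U.symm (μ (U x) (U y)) :=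
  rfl

theorem Contracts.of_tendsto_sub {U W : ℝ → V ≃ₗ[ℝ] V} {μ ν μ' : V →ₗ[ℝ] V →ₗ[ℝ] V}
    (h : Contracts U ν μ')
    (hsub : ∀ x y, Tendsto (fun ε => (W ε).symm (μ (W ε x) (W ε y)) -
      (U ε).symm (ν (U ε x) (U ε y))) (𝓝[>] 0) (𝓝 0)) :
    Contracts W μ μ' := fun x y => by
  simpa using (h x y).add (hsub x y)

variable [FiniteDimensional ℝ V]

theorem Contracts.tendsto_toContinuousBilinear {U : ℝ → V ≃ₗ[ℝ] V}
    {μ μ' : V →ₗ[ℝ] V →ₗ[ℝ] V} (h : Contracts U μ μ') :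
    Tendsto (fun ε => (conjBracket (U ε) μ).toContinuousBilinear) (𝓝[>] 0)
      (𝓝 μ'.toContinuousBilinear) :=
  ContinuousLinearMap.tendsto_of_tendsto_apply₂ h

theorem LinearEquiv.norm_symm_apply_apply_le (U : V ≃ₗ[ℝ] V) (β : V →L[ℝ] V →L[ℝ] V)
    (x y : V) :
    ‖U.symm (β (U x) (U y))‖ ≤ ‖(U.toContinuousLinearEquiv.symm : V →L[ℝ] V)‖ *
      ‖(U.toContinuousLinearEquiv : V →L[ℝ] V)‖ ^ 2 * ‖β‖ * (‖x‖ * ‖y‖) := by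
  set S : V →L[ℝ] V := ↑U.toContinuousLinearEquiv.symm
  set T : V →L[ℝ] V := ↑U.toContinuousLinearEquiv
  calc ‖S (β (T x) (T y))‖ ≤ ‖S‖ * (‖β‖ * ‖T x‖ * ‖T y‖) := by
        grw [S.le_opNorm, β.le_opNorm₂]
    _ ≤ ‖S‖ * (‖β‖ * (‖T‖ * ‖x‖) * (‖T‖ * ‖y‖)) := by
        grw [T.le_opNorm x, T.le_opNorm y]
    _ = ‖S‖ * ‖T‖ ^ 2 * ‖β‖ * (‖x‖ * ‖y‖) := by ring

end Bracket

/-- If `Û` contracts `μ` to `μ̂`, `Ũ` contracts `μ̂` to `μ̃`, and both families are continuous in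
the contraction parameter on `(0,1]`, then there is a continuous monotone reparameterization
`f : (0,1] → (0,1]` with `f(ε) → 0` as `ε → 0⁺` such that `ε ↦ Û (f ε) ∘ Ũ ε` contracts `μ`
to `μ̃`. -/
theorem contraction_composition {V : Type*} [NormedAddCommGroup V] [NormedSpace ℝ V]
    [FiniteDimensional ℝ V]
    (μ μh μt : V →ₗ[ℝ] V →ₗ[ℝ] V)
    (Uh Ut : ℝ → (V ≃ₗ[ℝ] V))
    (h1 : Contracts Uh μ μh) (h2 : Contracts Ut μh μt)
    (hcont : ∀ x : V,
      ContinuousOn (fun ε => Uh ε x) (Set.Ioc 0 1) ∧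
      ContinuousOn (fun ε => (Uh ε).symm x) (Set.Ioc 0 1) ∧
      ContinuousOn (fun ε => Ut ε x) (Set.Ioc 0 1) ∧
      ContinuousOn (fun ε => (Ut ε).symm x) (Set.Ioc 0 1)) :
    ∃ f : ℝ → ℝ,
      ContinuousOn f (Set.Ioc 0 1) ∧ MonotoneOn f (Set.Ioc 0 1) ∧
      Set.MapsTo f (Set.Ioc 0 1) (Set.Ioc 0 1) ∧
      Tendsto f (nhdsWithin 0 (Set.Ioi 0)) (nhds 0) ∧
      Contracts (fun ε => (Ut ε).trans (Uh (f ε))) μ μt := by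
  set Φ : ℝ → V →L[ℝ] V →L[ℝ] V := fun δ =>
    (conjBracket (Uh δ) μ).toContinuousBilinear - μh.toContinuousBilinear
  set C : ℝ → ℝ := fun ε => ‖((Ut ε).toContinuousLinearEquiv.symm : V →L[ℝ] V)‖ *
    ‖((Ut ε).toContinuousLinearEquiv : V →L[ℝ] V)‖ ^ 2
  have hC : ContinuousOn C (Ioc 0 1) :=
    (ContinuousLinearMap.continuousOn_of_continuousOn_apply fun x => (hcont x).2.2.2).norm.mul
      ((ContinuousLinearMap.continuousOn_of_continuousOn_apply fun x => (hcont x).2.2.1).norm.pow 2)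
  obtain ⟨f, hf_cont, hf_mono, hf_maps, hf_lim, hf_small⟩ :=
    exists_reparam_mul_norm_le hC (tendsto_sub_nhds_zero_iff.2 h1.tendsto_toContinuousBilinear)
  refine ⟨f, hf_cont, hf_mono, hf_maps, hf_lim, h2.of_tendsto_sub fun x y => ?_⟩
  refine squeeze_zero_norm' ?_
    (((continuous_mul_const (‖x‖ * ‖y‖)).tendsto' 0 0 (zero_mul _)).mono_left nhdsWithin_le_nhds)
  filter_upwards [Ioc_mem_nhdsGT one_pos] with ε hε
  calc _ = ‖(Ut ε).symm (Φ (f ε) (Ut ε x) (Ut ε y))‖ := by simp [Φ]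
    _ ≤ C ε * ‖Φ (f ε)‖ * (‖x‖ * ‖y‖) := (Ut ε).norm_symm_apply_apply_le _ x y
    _ ≤ ε * (‖x‖ * ‖y‖) := by gcongr; exact hf_small ε hε
end

section
/- Let V be a finite-dimensional normed real vector space, let μ, μ̂, μ̃ : V →ₗ[ℝ] V →ₗ[ℝ] V be bilinear maps (the Lie brackets of three Lie algebra structures on V), and let Û and Ũ be families of real-linear automorphisms of V indexed by ε ∈ (0,1] such that Û contracts μ to μ̂ and Ũ contracts μ̂ to μ̃. Assume all coefficients are given by Laurent series near 0 with finite principal part, i.e. for each x ∈ V there exist N : ℕ, δ > 0 and functions F, G : ℝ → V real-analytic on (−δ, δ) with Û ε x = ε^(−N) • F ε and (Û ε).symm x = ε^(−N) • G ε for all ε ∈ (0, δ), and similarly for Ũ ε x and (Ũ ε).symm x. Then there exists a positive integer ν such that the family ε ↦ Û (ε^ν) ∘ Ũ ε contracts μ to μ̃. -/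
/-!
Write `Û η = η^(-K̂) • F̂ η` and `(Û η)⁻¹ = η^(-K̂) • Ĝ η` with `F̂`, `Ĝ` operator-valued and
analytic at `0` (a basis makes the pole orders uniform), and likewise for `Ũ`. The doubly
transformed bracket is then `Φ(ε, η) = (ε^(3K̃) η^(3K̂))⁻¹ T_ε (r η)`, where
`r η = Ĝ η ∘ μ ∘ (F̂ η × F̂ η)` is analytic and `T_ε β = G̃ ε (β (F̃ ε x) (F̃ ε y))` is linear in
`β` and continuous in `ε`. Since `Φ(ε, ·)` converges as `η → 0⁺` (to `L ε`, say), every `T_ε`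
kills the Taylor coefficients of `r` of order `< 3K̂`, so `Φ(ε, η) = ε^(-3K̃) T_ε (q η)` for one
analytic `q` independent of `ε`. Then `q η = q 0 + O(η)` gives
`Φ(ε, ε^ν) = L ε + O(ε^(ν - 3K̃))`, and `L ε → μ̃ x y`; so `ν = 3K̃ + 1` works.
-/

open Filter

/-- The pair of functions `h`, `g` is given near `0` by Laurent expansions with finite principal
part: `h ε = ε^(-N) • F ε` and `g ε = ε^(-N) • G ε` on `(0, δ)` with `F`, `G` real-analytic on
`(-δ, δ)`. -/
def LaurentPair {V : Type*} [NormedAddCommGroup V] [NormedSpace ℝ V] (h g : ℝ → V) : Prop :=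
  ∃ (N : ℕ) (δ : ℝ), 0 < δ ∧ ∃ F G : ℝ → V,
    AnalyticOnNhd ℝ F (Set.Ioo (-δ) δ) ∧ AnalyticOnNhd ℝ G (Set.Ioo (-δ) δ) ∧
    ∀ ε ∈ Set.Ioo (0 : ℝ) δ, h ε = (ε ^ (-(N : ℤ))) • F ε ∧ g ε = (ε ^ (-(N : ℤ))) • G ε

open Topology Function

section

variable {𝕜 E E₁ E₂ H : Type*} [NontriviallyNormedField 𝕜]
  [NormedAddCommGroup E] [NormedSpace 𝕜 E] [NormedAddCommGroup E₁] [NormedSpace 𝕜 E₁]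
  [NormedAddCommGroup E₂] [NormedSpace 𝕜 E₂] [NormedAddCommGroup H] [NormedSpace 𝕜 H]

theorem AnalyticAt.iterate_dslope {f : 𝕜 → E} {a : 𝕜} (hf : AnalyticAt 𝕜 f a) (n : ℕ) :
    AnalyticAt 𝕜 ((swap dslope a)^[n] f) a :=
  let ⟨_, hp⟩ := hf
  (hp.has_fpower_series_iterate_dslope_fslope n).analyticAt

theorem AnalyticAt.clm_comp {g : H → E₁ →L[𝕜] E₂} {f : H → E →L[𝕜] E₁} {x : H}
    (hg : AnalyticAt 𝕜 g x) (hf : AnalyticAt 𝕜 f x) :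
    AnalyticAt 𝕜 (fun y => g y ∘L f y) x :=
  ((ContinuousLinearMap.compL 𝕜 E E₁ E₂).analyticAt_bilinear (g x, f x)).comp₂ hg hf

noncomputable def conjBilin (β : E →L[𝕜] E →L[𝕜] E) (F G : E →L[𝕜] E) : E →L[𝕜] E →L[𝕜] E :=
  ((ContinuousLinearMap.compL 𝕜 E E E).flip F ∘L ContinuousLinearMap.compL 𝕜 E E E G) ∘L (β ∘L F)

@[simp]
theorem conjBilin_apply (β : E →L[𝕜] E →L[𝕜] E) (F G : E →L[𝕜] E) (u w : E) :
    conjBilin β F G u w = G (β (F u) (F w)) :=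
  rfl

theorem AnalyticAt.conjBilin (β : E →L[𝕜] E →L[𝕜] E) {F G : H → E →L[𝕜] E} {x : H}
    (hF : AnalyticAt 𝕜 F x) (hG : AnalyticAt 𝕜 G x) :
    AnalyticAt 𝕜 (fun y => conjBilin β (F y) (G y)) x :=
  ((((ContinuousLinearMap.compL 𝕜 E E E).flip.analyticAt _).comp hF).clm_comp
    (((ContinuousLinearMap.compL 𝕜 E E E).analyticAt _).comp hG)).clm_comp
    (analyticAt_const.clm_comp hF)

noncomputable def bilinEvalL (G : E →L[𝕜] E) (u w : E) : (E →L[𝕜] E →L[𝕜] E) →L[𝕜] E :=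
  G ∘L ContinuousLinearMap.apply 𝕜 E w ∘L ContinuousLinearMap.apply 𝕜 (E →L[𝕜] E) u

@[simp]
theorem bilinEvalL_apply (G : E →L[𝕜] E) (u w : E) (β : E →L[𝕜] E →L[𝕜] E) :
    bilinEvalL G u w β = G (β u w) :=
  rfl

theorem ContinuousAt.bilinEvalL {X : Type*} [TopologicalSpace X] {G : X → E →L[𝕜] E}
    {u w : X → E} {x : X} (hG : ContinuousAt G x) (hu : ContinuousAt u x)
    (hw : ContinuousAt w x) :
    ContinuousAt (fun y => bilinEvalL (G y) (u y) (w y)) x :=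
  hG.clm_comp (((ContinuousLinearMap.apply 𝕜 E).continuous.continuousAt.comp hw).clm_comp
    ((ContinuousLinearMap.apply 𝕜 (E →L[𝕜] E)).continuous.continuousAt.comp hu))

end

section

variable {E V : Type*} [NormedAddCommGroup E] [NormedSpace ℝ E]
  [NormedAddCommGroup V] [NormedSpace ℝ V]

theorem apply_eq_pow_smul_apply_iterate_dslope_of_tendsto {r : ℝ → E} (hr : AnalyticAt ℝ r 0)
    (T : E →L[ℝ] V) {b : ℕ} {L : V}
    (h : Tendsto (fun η => (η ^ b)⁻¹ • T (r η)) (𝓝[>] 0) (𝓝 L)) :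
    (∀ η, T (r η) = η ^ b • T ((swap dslope 0)^[b] r η)) ∧
      T ((swap dslope 0)^[b] r 0) = L := by
  have hcont : ∀ {f : ℝ → E}, AnalyticAt ℝ f 0 →
      Tendsto (fun η => T (f η)) (𝓝[>] 0) (𝓝 (T (f 0))) := fun hf =>
    ((T.continuous.tendsto _).comp hf.continuousAt).mono_left nhdsWithin_le_nhds
  induction b generalizing r with
  | zero =>
    exact ⟨fun η => by simp, by simpa using tendsto_nhds_unique (hcont hr) (by simpa using h)⟩
  | succ b ih =>
    have hr0 : T (r 0) = 0 := by
      have hpow : Tendsto (fun η : ℝ => η ^ (b + 1)) (𝓝[>] 0) (𝓝 0) := by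
        simpa using ((continuous_pow (b + 1)).tendsto (0 : ℝ)).mono_left nhdsWithin_le_nhds
      refine tendsto_nhds_unique (hcont hr) ?_
      simpa using (hpow.smul h).congr' <| by
        filter_upwards [self_mem_nhdsWithin] with η (hη : 0 < η)
        rw [smul_smul, mul_inv_cancel₀ (pow_ne_zero _ hη.ne'), one_smul]
    have hslope : ∀ η, T (r η) = η • T (dslope r 0 η) := fun η => by
      simpa [hr0] using (congrArg T (sub_smul_dslope r 0 η)).symm
    obtain ⟨hfac, hval⟩ := ih (hr.iterate_dslope 1) <| h.congr' <| by
      filter_upwards [self_mem_nhdsWithin] with η (hη : 0 < η)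
      rw [hslope, smul_smul, pow_succ, mul_inv, mul_assoc, inv_mul_cancel₀ hη.ne', mul_one]
      rfl
    refine ⟨fun η => ?_, hval⟩
    rw [hslope, iterate_succ_apply, pow_succ', mul_smul]
    exact congrArg _ (hfac η)

theorem tendsto_inv_pow_smul_apply_pow {r : ℝ → E} (hr : AnalyticAt ℝ r 0)
    {T : ℝ → E →L[ℝ] V} (hT : ContinuousAt T 0) {a b ν : ℕ} (hν : a < ν) {L : ℝ → V} {l : V}
    (hL : ∀ᶠ ε in 𝓝[>] 0,
      Tendsto (fun η => (ε ^ a * η ^ b)⁻¹ • T ε (r η)) (𝓝[>] 0) (𝓝 (L ε)))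
    (hl : Tendsto L (𝓝[>] 0) (𝓝 l)) :
    Tendsto (fun ε => (ε ^ a * (ε ^ ν) ^ b)⁻¹ • T ε (r (ε ^ ν))) (𝓝[>] 0) (𝓝 l) := by
  have hq : ∀ η, (swap dslope 0)^[b] r η =
      (swap dslope 0)^[b] r 0 + η • (swap dslope 0)^[b + 1] r η := fun η => by
    rw [iterate_succ_apply']
    exact eq_add_of_sub_eq' (by simpa using (sub_smul_dslope _ 0 η).symm)
  have hexp : ∀ᶠ ε in 𝓝[>] 0, (ε ^ a * (ε ^ ν) ^ b)⁻¹ • T ε (r (ε ^ ν)) =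
      L ε + ε ^ (ν - a) • T ε ((swap dslope 0)^[b + 1] r (ε ^ ν)) := by
    filter_upwards [hL, self_mem_nhdsWithin] with ε hε (hε0 : 0 < ε)
    have hεa : ε ^ a ≠ 0 := pow_ne_zero _ hε0.ne'
    obtain ⟨hfac, hval⟩ :=
      apply_eq_pow_smul_apply_iterate_dslope_of_tendsto hr (T ε) (L := ε ^ a • L ε) <|
      (hε.const_smul (ε ^ a)).congr fun η => by
        rw [smul_smul, mul_inv, ← mul_assoc, mul_inv_cancel₀ hεa, one_mul]
    rw [hfac, hq, map_add, map_smul, hval, smul_smul, mul_inv, mul_assoc,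
      inv_mul_cancel₀ (pow_ne_zero _ (pow_ne_zero _ hε0.ne')), mul_one, smul_add, smul_smul,
      inv_mul_cancel₀ hεa, one_smul, smul_smul, pow_sub₀ _ hε0.ne' hν.le, mul_comm]
  have hrem : Tendsto (fun ε => ε ^ (ν - a) • T ε ((swap dslope 0)^[b + 1] r (ε ^ ν)))
      (𝓝[>] 0) (𝓝 0) := by
    have hcont : ContinuousAt (fun ε => T ε ((swap dslope 0)^[b + 1] r (ε ^ ν))) 0 :=
      hT.clm_apply <| (hr.iterate_dslope (b + 1)).continuousAt.comp_of_eq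
        (continuous_pow ν).continuousAt (zero_pow (by omega))
    simpa [zero_pow (show ν - a ≠ 0 by omega)] using
      (((continuous_pow (ν - a)).tendsto 0).smul hcont.tendsto).mono_left nhdsWithin_le_nhds
  simpa using (hl.add hrem).congr' (hexp.mono fun _ h => h.symm)

theorem tendsto_pow_nhdsGT_zero {n : ℕ} (hn : n ≠ 0) :
    Tendsto (fun ε : ℝ => ε ^ n) (𝓝[>] 0) (𝓝[>] 0) :=
  tendsto_nhdsWithin_of_tendsto_nhds_of_eventually_within _
    ((continuous_pow n).tendsto' 0 0 (zero_pow hn) |>.mono_left nhdsWithin_le_nhds)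
    (eventually_nhdsWithin_of_forall fun _ hε => pow_pos (Set.mem_Ioi.1 hε) n)

def ScaledPair (U : V ≃ₗ[ℝ] V) (c : ℝ) (F G : V →L[ℝ] V) : Prop :=
  ∀ v, U v = c⁻¹ • F v ∧ U.symm v = c⁻¹ • G v

theorem LaurentPair.exists_inv_pow_smul {h g : ℝ → V} (H : LaurentPair h g) :
    ∃ N : ℕ, ∀ K, N ≤ K → ∃ F G : ℝ → V, AnalyticAt ℝ F 0 ∧ AnalyticAt ℝ G 0 ∧
      ∀ᶠ ε in 𝓝[>] 0, h ε = (ε ^ K)⁻¹ • F ε ∧ g ε = (ε ^ K)⁻¹ • G ε := by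
  obtain ⟨N, δ, hδ, F, G, hF, hG, hFG⟩ := H
  have h0 : (0 : ℝ) ∈ Set.Ioo (-δ) δ := ⟨neg_neg_iff_pos.2 hδ, hδ⟩
  refine ⟨N, fun K hK => ⟨fun ε => ε ^ (K - N) • F ε, fun ε => ε ^ (K - N) • G ε,
    (analyticAt_id.pow _).smul (hF 0 h0), (analyticAt_id.pow _).smul (hG 0 h0), ?_⟩⟩
  filter_upwards [Ioo_mem_nhdsGT hδ] with ε hε
  have hpow : ε ^ (-(N : ℤ)) = (ε ^ K)⁻¹ * ε ^ (K - N) := by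
    rw [pow_sub₀ _ hε.1.ne' hK, inv_mul_cancel_left₀ (pow_ne_zero _ hε.1.ne'), zpow_neg,
      zpow_natCast]
  simp only [hFG ε hε, hpow, mul_smul, and_self]

theorem exists_scaledPair_of_laurentPair [FiniteDimensional ℝ V] {U : ℝ → V ≃ₗ[ℝ] V}
    (hU : ∀ x, LaurentPair (fun ε => U ε x) (fun ε => (U ε).symm x)) :
    ∃ (K : ℕ) (F G : ℝ → V →L[ℝ] V), AnalyticAt ℝ F 0 ∧ AnalyticAt ℝ G 0 ∧
      ∀ᶠ ε in 𝓝[>] 0, ScaledPair (U ε) (ε ^ K) (F ε) (G ε) := by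
  let e := Module.finBasis ℝ V
  choose N hN using fun i => (hU (e i)).exists_inv_pow_smul
  obtain ⟨K, hK⟩ : ∃ K, ∀ i, N i ≤ K := ⟨_, fun i => Finset.le_sup (Finset.mem_univ i)⟩
  choose F G hF hG hFG using fun i => hN i K (hK i)
  let Ψ : (Fin (Module.finrank ℝ V) → V) →L[ℝ] V →L[ℝ] V := LinearMap.toContinuousLinearMap
    (LinearMap.toContinuousLinearMap.toLinearMap ∘ₗ (e.constr ℝ).toLinearMap)
  refine ⟨K, fun ε => Ψ (F · ε), fun ε => Ψ (G · ε), (Ψ.analyticAt _).comp (.pi hF),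
    (Ψ.analyticAt _).comp (.pi hG), ?_⟩
  filter_upwards [eventually_all.2 hFG] with ε hε v
  have hext : ∀ (f : V →ₗ[ℝ] V) (w : Fin (Module.finrank ℝ V) → V),
      (∀ i, f (e i) = (ε ^ K)⁻¹ • w i) → f v = (ε ^ K)⁻¹ • Ψ w v := fun f w hf =>
    LinearMap.congr_fun (e.ext (f₂ := (ε ^ K)⁻¹ • e.constr ℝ w) fun i => by simp [hf i]) v
  exact ⟨hext (U ε).toLinearMap _ fun i => (hε i).1,
    hext (U ε).symm.toLinearMap _ fun i => (hε i).2⟩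

theorem ScaledPair.symm_bilin_apply {U : V ≃ₗ[ℝ] V} {c : ℝ} {F G : V →L[ℝ] V}
    (hU : ScaledPair U c F G) (β : V →L[ℝ] V →L[ℝ] V) (u w : V) :
    U.symm (β (U u) (U w)) = (c ^ 3)⁻¹ • conjBilin β F G u w := by
  simp only [fun v => (hU v).1, fun v => (hU v).2, map_smul, smul_apply, smul_smul,
    conjBilin_apply]
  congr 1
  ring

theorem ScaledPair.trans_symm_bilin_apply {U U' : V ≃ₗ[ℝ] V} {c d : ℝ} {F G F' G' : V →L[ℝ] V}
    (hU : ScaledPair U c F G) (hU' : ScaledPair U' d F' G') (β : V →L[ℝ] V →L[ℝ] V) (u w : V) :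
    (U.trans U').symm (β (U.trans U' u) (U.trans U' w)) =
      (c ^ 3 * d ^ 3)⁻¹ • bilinEvalL G (F u) (F w) (conjBilin β F' G') := by
  rw [LinearEquiv.trans_apply, LinearEquiv.trans_apply, LinearEquiv.symm_trans_apply,
    hU'.symm_bilin_apply, map_smul, hU.symm_bilin_apply, smul_smul, mul_inv, mul_comm]
  rfl

end

/-- If `Û` contracts `μ` to `μ̂`, `Ũ` contracts `μ̂` to `μ̃`, and the coefficients of both
families are given by Laurent series near `0`, then for some positive integer `ν` the family
`ε ↦ Û (ε^ν) ∘ Ũ ε` contracts `μ` to `μ̃`. -/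
theorem contraction_composition_laurent {V : Type*} [NormedAddCommGroup V] [NormedSpace ℝ V]
    [FiniteDimensional ℝ V]
    (μ μh μt : V →ₗ[ℝ] V →ₗ[ℝ] V)
    (Uh Ut : ℝ → (V ≃ₗ[ℝ] V))
    (h1 : Contracts Uh μ μh) (h2 : Contracts Ut μh μt)
    (hlaurent : ∀ x : V,
      LaurentPair (fun ε => Uh ε x) (fun ε => (Uh ε).symm x) ∧
      LaurentPair (fun ε => Ut ε x) (fun ε => (Ut ε).symm x)) :
    ∃ ν : ℕ, 0 < ν ∧ Contracts (fun ε => (Ut ε).trans (Uh (ε ^ ν))) μ μt := by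
  obtain ⟨Kh, Fh, Gh, hFh, hGh, hUh⟩ := exists_scaledPair_of_laurentPair fun x => (hlaurent x).1
  obtain ⟨Kt, Ft, Gt, hFt, hGt, hUt⟩ := exists_scaledPair_of_laurentPair fun x => (hlaurent x).2
  refine ⟨3 * Kt + 1, by omega, fun x y => ?_⟩
  have hrep : ∀ {ε η : ℝ}, ScaledPair (Ut ε) (ε ^ Kt) (Ft ε) (Gt ε) →
      ScaledPair (Uh η) (η ^ Kh) (Fh η) (Gh η) →
      ((Ut ε).trans (Uh η)).symm (μ ((Ut ε).trans (Uh η) x) ((Ut ε).trans (Uh η) y)) =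
        (ε ^ (3 * Kt) * η ^ (3 * Kh))⁻¹ • bilinEvalL (Gt ε) (Ft ε x) (Ft ε y)
          (conjBilin μ.toContinuousBilinearMap (Fh η) (Gh η)) := fun hε hη => by
    rw [pow_mul', pow_mul', ← hε.trans_symm_bilin_apply hη]
    rfl
  have hT := hGt.continuousAt.bilinEvalL (hFt.continuousAt.clm_apply (continuousAt_const (y := x)))
    (hFt.continuousAt.clm_apply (continuousAt_const (y := y)))
  refine (tendsto_inv_pow_smul_apply_pow (a := 3 * Kt) (b := 3 * Kh)
    (hFh.conjBilin μ.toContinuousBilinearMap hGh) hT (Nat.lt_succ_self _) ?_ (h2 x y)).congr' ?_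
  · filter_upwards [hUt] with ε hε
    refine (((Ut ε).symm.toContinuousLinearEquiv.continuous.tendsto _).comp (h1 _ _)).congr' ?_
    filter_upwards [hUh] with η hη
    simpa using hrep hε hη
  · filter_upwards [hUt, (tendsto_pow_nhdsGT_zero (3 * Kt).succ_ne_zero).eventually hUh]
      with ε hε hη
    exact (hrep hε hη).symm
end
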